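/- arXiv:2112.00306 — 3 statements merged into one kernel-verified Lean document; each statement's English description precedes it below -/
import Mathlib

section
/- (Szemerédi–Trotter, rich-lines form) There exists an absolute constant C > 0 such that for every finite set P of n points in ℝ² and every integer r ≥ 2, the number of distinct lines in ℝ² that each contain at least r points of P is at most C·(n²/r³ + n/r). -/
/-- A line in `ℝ²`: a set of the form `{(x,y) : a·x + b·y = c}` with `(a,b) ≠ (0,0)`. -/
def IsLine (ℓ : Set (ℝ × ℝ)) : Prop :=
  ∃ a b c : ℝ, (a, b) ≠ (0, 0) ∧ ℓ = {p : ℝ × ℝ | a * p.1 + b * p.2 = c}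

noncomputable section
open Classical Finset Real

namespace ST

abbrev Pt := ℝ × ℝ

lemma two_mul_choose_two (n : ℕ) : n * (n - 1) = 2 * n.choose 2 := by
  rw [Nat.choose_two_right]
  have h2 : 2 ∣ n * (n - 1) := by
    cases n with
    | zero => simp
    | succ m => simpa [Nat.mul_comm] using (Nat.even_mul_succ_self m).two_dvd
  omega

/-- core double counting: a family of subsets of `U`, pairwise sharing at most one
element, satisfies `∑ |F i| (|F i| - 1) ≤ |U| (|U| - 1)`. -/
lemma sum_mul_sub_one_le {ι α : Type*} (I : Finset ι) (F : ι → Finset α) (U : Finset α)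
    (hsub : ∀ i ∈ I, F i ⊆ U)
    (hpair : ∀ i ∈ I, ∀ j ∈ I, i ≠ j →
      ∀ a, a ∈ F i → a ∈ F j → ∀ b, b ∈ F i → b ∈ F j → a = b) :
    ∑ i ∈ I, (F i).card * ((F i).card - 1) ≤ U.card * (U.card - 1) := by
  classical
  have hdisj : ∀ i ∈ I, ∀ j ∈ I, i ≠ j →
      Disjoint ((F i).powersetCard 2) ((F j).powersetCard 2) := by
    intro i hi j hj hij
    rw [Finset.disjoint_left]
    intro s hs hs'
    rw [Finset.mem_powersetCard] at hs hs'
    obtain ⟨a, b, hab, hs2⟩ := Finset.card_eq_two.1 hs.2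
    have ha : a ∈ s := by rw [hs2]; simp
    have hb : b ∈ s := by rw [hs2]; simp
    exact hab (hpair i hi j hj hij a (hs.1 ha) (hs'.1 ha) b (hs.1 hb) (hs'.1 hb))
  have hb : ∑ i ∈ I, ((F i).powersetCard 2).card ≤ (U.powersetCard 2).card := by
    rw [← Finset.card_biUnion hdisj]
    apply Finset.card_le_card
    intro s hs
    rw [Finset.mem_biUnion] at hs
    obtain ⟨i, hi, hs⟩ := hs
    rw [Finset.mem_powersetCard] at hs ⊢
    exact ⟨hs.1.trans (hsub i hi), hs.2⟩
  simp only [Finset.card_powersetCard] at hb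
  calc ∑ i ∈ I, (F i).card * ((F i).card - 1)
      = ∑ i ∈ I, 2 * ((F i).card.choose 2) := by
        apply Finset.sum_congr rfl; intro i _; exact two_mul_choose_two _
    _ = 2 * ∑ i ∈ I, ((F i).card.choose 2) := by rw [Finset.mul_sum]
    _ ≤ 2 * (U.card.choose 2) := by omega
    _ = U.card * (U.card - 1) := (two_mul_choose_two _).symm

/-- quadratic root bound : if `x² ≤ a x + a b²` then `x ≤ a + b √a`. -/
lemma quad_bound {x a b : ℝ} (ha : 0 ≤ a) (hb : 0 ≤ b)
    (h : x ^ 2 ≤ a * x + a * b ^ 2) : x ≤ a + b * Real.sqrt a := by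
  rcases le_or_gt x a with hxa | hxa
  · have : 0 ≤ b * Real.sqrt a := mul_nonneg hb (Real.sqrt_nonneg a)
    linarith
  · have hx0 : 0 < x := lt_of_le_of_lt ha hxa
    have h1 : (x - a) ^ 2 ≤ x * (x - a) := by nlinarith
    have h2 : x * (x - a) ≤ a * b ^ 2 := by nlinarith
    have h3 : (x - a) ^ 2 ≤ (b * Real.sqrt a) ^ 2 := by
      have : (b * Real.sqrt a) ^ 2 = b ^ 2 * a := by
        rw [mul_pow, Real.sq_sqrt ha]
      nlinarith
    have h4 : x - a ≤ b * Real.sqrt a := by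
      have hnn : 0 ≤ b * Real.sqrt a := mul_nonneg hb (Real.sqrt_nonneg a)
      nlinarith [sq_nonneg (x - a - b * Real.sqrt a)]
    linarith

def lv (l : Pt) (x : ℝ) : ℝ := l.1 * x + l.2
def onl (l p : Pt) : Prop := p.2 = lv l p.1

lemma onl_same_x {l p p' : Pt} (hp : onl l p) (hp' : onl l p') (h : p.1 = p'.1) : p = p' := by
  unfold onl lv at hp hp'
  have : p.2 = p'.2 := by rw [hp, hp', h]
  exact Prod.ext h this

lemma line_unique {l l' p p' : Pt} (h1 : onl l p) (h2 : onl l p') (h3 : onl l' p)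
    (h4 : onl l' p') (hpp : p.1 ≠ p'.1) : l = l' := by
  unfold onl lv at h1 h2 h3 h4
  have hs : l.1 = l'.1 := by
    have d1 : l.1 * (p.1 - p'.1) = p.2 - p'.2 := by rw [h1, h2]; ring
    have d2 : l'.1 * (p.1 - p'.1) = p.2 - p'.2 := by rw [h3, h4]; ring
    have := d1.trans d2.symm
    have hne := sub_ne_zero.2 hpp
    field_simp [hne] at this
    linarith [this]
  have hc : l.2 = l'.2 := by
    have := h1.symm.trans h3
    rw [hs] at this; linarith
  exact Prod.ext hs hc

/-- number of lines of `L` strictly below line `l` at abscissa `x`. -/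
def idx (L : Finset Pt) (l : Pt) (x : ℝ) : ℕ := (L.filter fun l' => lv l' x < lv l x).card
/-- number of lines of `L` strictly below the point `p`. -/
def lam (L : Finset Pt) (p : Pt) : ℕ := (L.filter fun l' => lv l' p.1 < p.2).card
/-- number of lines of `L` through the point `p`. -/
def wt (L : Finset Pt) (p : Pt) : ℕ := (L.filter fun l => onl l p).card

lemma lam_eq_idx {L : Finset Pt} {l p : Pt} (hl : onl l p) : lam L p = idx L l p.1 := by
  unfold lam idx
  congr 1
  apply Finset.filter_congr
  intro l' _
  rw [onl] at hl
  simp [hl]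

lemma idx_eq_lam {L : Finset Pt} (l : Pt) (x : ℝ) : idx L l x = lam L (x, lv l x) :=
  (lam_eq_idx (L := L) (l := l) (p := (x, lv l x)) rfl).symm

/-- `l'` crosses `l` at `x` (some other line of `L` agrees with `l` at `x`). -/
def tieW (L : Finset Pt) (l : Pt) (x : ℝ) : Prop := ∃ l' ∈ L, l' ≠ l ∧ lv l' x = lv l x
/-- some two distinct lines of `L` agree at `x`. -/
def tieAt (L : Finset Pt) (x : ℝ) : Prop := ∃ l ∈ L, ∃ l' ∈ L, l' ≠ l ∧ lv l' x = lv l x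

/-- a finite set of reals containing all abscissas where two lines of `L` agree. -/
def tieX (L : Finset Pt) : Finset ℝ :=
  ((L ×ˢ L).filter fun q => q.1 ≠ q.2).image fun q => (q.2.2 - q.1.2) / (q.1.1 - q.2.1)

lemma tie_mem_tieX {L : Finset Pt} {l l' : Pt} (hl : l ∈ L) (hl' : l' ∈ L) (hne : l' ≠ l)
    {x : ℝ} (hx : lv l' x = lv l x) : x ∈ tieX L := by
  rw [tieX, Finset.mem_image]
  refine ⟨(l, l'), by simp [Finset.mem_filter, hl, hl', Ne.symm hne], ?_⟩
  have hs : l.1 ≠ l'.1 := by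
    intro hs
    apply hne
    unfold lv at hx
    rw [hs] at hx
    have : l'.2 = l.2 := by linarith
    exact Prod.ext hs.symm this
  unfold lv at hx
  field_simp [sub_ne_zero.2 hs]
  linarith

lemma tieAt_mem_tieX {L : Finset Pt} {x : ℝ} (h : tieAt L x) : x ∈ tieX L := by
  obtain ⟨l, hl, l', hl', hne, hx⟩ := h
  exact tie_mem_tieX hl hl' hne hx

lemma tieW_tieAt {L : Finset Pt} {l : Pt} {x : ℝ} (hl : l ∈ L) (h : tieW L l x) :
    tieAt L x := by
  obtain ⟨l', hl', hne, hx⟩ := h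
  exact ⟨l, hl, l', hl', hne, hx⟩

lemma exists_tiefree {a b : ℝ} (hab : a < b) (s : Finset ℝ) :
    ∃ x, a < x ∧ x < b ∧ x ∉ s := by
  have h1 : (Set.Ioo a b).Infinite := Set.infinite_coe_iff.mp (Set.Ioo.infinite hab)
  obtain ⟨x, hx⟩ := (h1.diff s.finite_toSet).nonempty
  exact ⟨x, hx.1.1, hx.1.2, fun hc => hx.2 (by simpa using hc)⟩

/-- sign of `lv l' - lv l` is constant on an interval with no crossing with `l`. -/
lemma sign_const {l l' : Pt} {x y : ℝ} (hxy : x ≤ y)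
    (hno : ∀ u, x ≤ u → u ≤ y → lv l' u ≠ lv l u) :
    (lv l' x < lv l x ↔ lv l' y < lv l y) := by
  have hcont : ContinuousOn (fun u => lv l' u - lv l u) (Set.Icc x y) := by
    apply Continuous.continuousOn
    unfold lv
    continuity
  constructor
  · intro h
    by_contra hy
    push_neg at hy
    have h0 : (0:ℝ) ∈ Set.Icc (lv l' x - lv l x) (lv l' y - lv l y) :=
      ⟨by linarith, by linarith⟩
    obtain ⟨u, hu, hu0⟩ := intermediate_value_Icc hxy hcont h0
    have hu0' : lv l' u - lv l u = 0 := hu0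
    exact hno u hu.1 hu.2 (by linarith)
  · intro h
    by_contra hy
    push_neg at hy
    have h0 : (0:ℝ) ∈ Set.Icc (lv l' y - lv l y) (lv l' x - lv l x) :=
      ⟨by linarith, by linarith⟩
    obtain ⟨u, hu, hu0⟩ := intermediate_value_Icc' hxy hcont h0
    have hu0' : lv l' u - lv l u = 0 := hu0
    exact hno u hu.1 hu.2 (by linarith)

/-- the below-`l` set is constant on intervals free of crossings with `l`. -/
lemma idx_const {L : Finset Pt} {l : Pt} {x y : ℝ} (hxy : x ≤ y)
    (hno : ∀ u, x ≤ u → u ≤ y → ¬ tieW L l u) :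
    idx L l x = idx L l y := by
  unfold idx
  congr 1
  apply Finset.filter_congr
  intro l' hl'
  by_cases hne : l' = l
  · subst hne; simp
  · have : ∀ u, x ≤ u → u ≤ y → lv l' u ≠ lv l u := by
      intro u h1 h2 he
      exact hno u h1 h2 ⟨l', hl', hne, he⟩
    rw [sign_const hxy this]

lemma wt_pos {L : Finset Pt} {l : Pt} (hl : l ∈ L) (x : ℝ) : 1 ≤ wt L (x, lv l x) := by
  exact Finset.card_pos.2 ⟨l, Finset.mem_filter.2 ⟨hl, rfl⟩⟩

/-- Local structure, left side: just left of `x₀` (with no crossing with `l` in `[x, x₀)`),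
`idx` is between `lam p₀` and `lam p₀ + wt p₀ - 1` where `p₀` is the point of `l` at `x₀`. -/
lemma LS_left {L : Finset Pt} {l : Pt} (hl : l ∈ L) {x x₀ : ℝ} (hx : x < x₀)
    (hno : ∀ u, x ≤ u → u < x₀ → ¬ tieW L l u) :
    lam L (x₀, lv l x₀) ≤ idx L l x ∧
      idx L l x + 1 ≤ lam L (x₀, lv l x₀) + wt L (x₀, lv l x₀) := by
  constructor
  · -- lower bound : strictly-below at x₀ ⊆ strictly-below at x
    apply Finset.card_le_card
    intro l' hl'
    rw [Finset.mem_filter] at hl' ⊢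
    refine ⟨hl'.1, ?_⟩
    have h0 : lv l' x₀ < lv l x₀ := hl'.2
    by_contra hc
    push_neg at hc
    -- lv l' x ≥ lv l x and < at x₀ : crossing in [x, x₀)
    have hne : l' ≠ l := by intro h; rw [h] at h0; exact lt_irrefl _ h0
    by_cases hex : lv l' x = lv l x
    · exact hno x le_rfl hx ⟨l', hl'.1, hne, hex⟩
    · have hgt : lv l l'.1 = lv l l'.1 := rfl
      have : ¬ (lv l' x < lv l x ↔ lv l' x₀ < lv l x₀) := by
        intro hiff
        exact absurd (hiff.2 h0) (not_lt.2 hc)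
      apply this
      apply sign_const (le_of_lt hx)
      intro u h1 h2 he
      rcases eq_or_lt_of_le h2 with h2' | h2'
      · rw [h2'] at he; unfold lv at he h0; linarith
      · exact hno u h1 h2' ⟨l', hl'.1, hne, he⟩
  · -- upper bound
    have hsub : insert l (L.filter fun l' => lv l' x < lv l x) ⊆
        (L.filter fun l' => lv l' x₀ < lv l x₀) ∪ (L.filter fun l' => onl l' (x₀, lv l x₀)) := by
      intro l' hl'
      rw [Finset.mem_insert] at hl'
      rcases hl' with h | h
      · subst h
        apply Finset.mem_union_right
        exact Finset.mem_filter.2 ⟨hl, by simp [onl]⟩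
      · rw [Finset.mem_filter] at h
        have hne : l' ≠ l := by
          intro he; rw [he] at h; exact lt_irrefl _ h.2
        by_cases he : lv l' x₀ = lv l x₀
        · exact Finset.mem_union_right _ (Finset.mem_filter.2 ⟨h.1, by simp [onl, he]⟩)
        · apply Finset.mem_union_left
          refine Finset.mem_filter.2 ⟨h.1, lt_of_le_of_ne ?_ he⟩
          by_contra hc
          push_neg at hc
          have : ¬ (lv l' x < lv l x ↔ lv l' x₀ < lv l x₀) := by
            intro hiff
            exact absurd (hiff.1 h.2) (not_lt.2 (le_of_lt hc))
          apply this
          apply sign_const (le_of_lt hx)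
          intro u h1 h2 heq
          rcases eq_or_lt_of_le h2 with h2' | h2'
          · rw [h2'] at heq; exact he heq
          · exact hno u h1 h2' ⟨l', h.1, hne, heq⟩
    have hli : l ∉ (L.filter fun l' => lv l' x < lv l x) := by
      simp [Finset.mem_filter]
    have hcard := Finset.card_le_card hsub
    rw [Finset.card_insert_of_notMem hli] at hcard
    have hdisj : Disjoint (L.filter fun l' => lv l' x₀ < lv l x₀)
        (L.filter fun l' => onl l' (x₀, lv l x₀)) := by
      rw [Finset.disjoint_filter]
      intro l' _ h1 h2
      rw [onl] at h2
      simp only at h2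
      unfold lv at h1 h2
      linarith [h2]
    calc idx L l x + 1 ≤ ((L.filter fun l' => lv l' x₀ < lv l x₀) ∪
          (L.filter fun l' => onl l' (x₀, lv l x₀))).card := hcard
      _ = lam L (x₀, lv l x₀) + wt L (x₀, lv l x₀) := by
          rw [Finset.card_union_of_disjoint hdisj]; rfl

/-- Local structure, right side. -/
lemma LS_right {L : Finset Pt} {l : Pt} (hl : l ∈ L) {x₀ x : ℝ} (hx : x₀ < x)
    (hno : ∀ u, x₀ < u → u ≤ x → ¬ tieW L l u) :
    lam L (x₀, lv l x₀) ≤ idx L l x ∧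
      idx L l x + 1 ≤ lam L (x₀, lv l x₀) + wt L (x₀, lv l x₀) := by
  constructor
  · apply Finset.card_le_card
    intro l' hl'
    rw [Finset.mem_filter] at hl' ⊢
    refine ⟨hl'.1, ?_⟩
    have h0 : lv l' x₀ < lv l x₀ := hl'.2
    by_contra hc
    push_neg at hc
    have hne : l' ≠ l := by intro h; rw [h] at h0; exact lt_irrefl _ h0
    by_cases hex : lv l' x = lv l x
    · exact hno x hx le_rfl ⟨l', hl'.1, hne, hex⟩
    · have : ¬ (lv l' x₀ < lv l x₀ ↔ lv l' x < lv l x) := by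
        intro hiff
        exact absurd (hiff.1 h0) (not_lt.2 hc)
      apply this
      apply sign_const (le_of_lt hx)
      intro u h1 h2 he
      rcases eq_or_lt_of_le h1 with h1' | h1'
      · rw [← h1'] at he; unfold lv at he h0; linarith
      · exact hno u h1' h2 ⟨l', hl'.1, hne, he⟩
  · have hsub : insert l (L.filter fun l' => lv l' x < lv l x) ⊆
        (L.filter fun l' => lv l' x₀ < lv l x₀) ∪ (L.filter fun l' => onl l' (x₀, lv l x₀)) := by
      intro l' hl'
      rw [Finset.mem_insert] at hl'
      rcases hl' with h | h
      · subst h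
        exact Finset.mem_union_right _ (Finset.mem_filter.2 ⟨hl, by simp [onl]⟩)
      · rw [Finset.mem_filter] at h
        have hne : l' ≠ l := by
          intro he; rw [he] at h; exact lt_irrefl _ h.2
        by_cases he : lv l' x₀ = lv l x₀
        · exact Finset.mem_union_right _ (Finset.mem_filter.2 ⟨h.1, by simp [onl, he]⟩)
        · apply Finset.mem_union_left
          refine Finset.mem_filter.2 ⟨h.1, lt_of_le_of_ne ?_ he⟩
          by_contra hc
          push_neg at hc
          have : ¬ (lv l' x₀ < lv l x₀ ↔ lv l' x < lv l x) := by
            intro hiff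
            exact absurd (hiff.2 h.2) (not_lt.2 (le_of_lt hc))
          apply this
          apply sign_const (le_of_lt hx)
          intro u h1 h2 heq
          rcases eq_or_lt_of_le h1 with h1' | h1'
          · rw [← h1'] at heq; exact he heq
          · exact hno u h1' h2 ⟨l', h.1, hne, heq⟩
    have hli : l ∉ (L.filter fun l' => lv l' x < lv l x) := by
      simp [Finset.mem_filter]
    have hcard := Finset.card_le_card hsub
    rw [Finset.card_insert_of_notMem hli] at hcard
    have hdisj : Disjoint (L.filter fun l' => lv l' x₀ < lv l x₀)
        (L.filter fun l' => onl l' (x₀, lv l x₀)) := by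
      rw [Finset.disjoint_filter]
      intro l' _ h1 h2
      rw [onl] at h2
      simp only at h2
      unfold lv at h1 h2
      linarith [h2]
    calc idx L l x + 1 ≤ ((L.filter fun l' => lv l' x₀ < lv l x₀) ∪
          (L.filter fun l' => onl l' (x₀, lv l x₀))).card := hcard
      _ = lam L (x₀, lv l x₀) + wt L (x₀, lv l x₀) := by
          rw [Finset.card_union_of_disjoint hdisj]; rfl

lemma not_tieAt_of_not_mem {L : Finset Pt} {x : ℝ} (h : x ∉ tieX L) : ¬ tieAt L x :=
  fun hc => h (tieAt_mem_tieX hc)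

/-- The walk lemma: entering the window `[m, m')` happens at a relevant crossing. -/
lemma walk {L : Finset Pt} {l : Pt} (hl : l ∈ L) (m m' : ℕ) :
    ∀ n : ℕ, ∀ x₁ x₂ : ℝ,
    ((tieX L).filter (fun y => x₁ < y ∧ y ≤ x₂ ∧ tieW L l y)).card ≤ n →
    x₁ < x₂ → ¬ tieAt L x₁ →
    ¬ (m ≤ idx L l x₁ ∧ idx L l x₁ < m') → (m ≤ idx L l x₂ ∧ idx L l x₂ < m') →
    ∃ x₀, x₁ < x₀ ∧ x₀ ≤ x₂ ∧ tieW L l x₀ ∧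
      ((lam L (x₀, lv l x₀) < m ∧ m < lam L (x₀, lv l x₀) + wt L (x₀, lv l x₀)) ∨
       (lam L (x₀, lv l x₀) < m' ∧ m' < lam L (x₀, lv l x₀) + wt L (x₀, lv l x₀))) ∧
      ∀ x, x₀ < x → x ≤ x₂ → ¬ tieAt L x → (m ≤ idx L l x ∧ idx L l x < m') := by
  intro n
  induction n with
  | zero =>
      intro x₁ x₂ hcard hx htf h₁ h₂
      exfalso
      apply h₁
      have hno : ∀ u, x₁ ≤ u → u ≤ x₂ → ¬ tieW L l u := by
        intro u h1 h2 htw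
        rcases eq_or_lt_of_le h1 with h1' | h1'
        · exact htf (h1' ▸ tieW_tieAt hl htw)
        · have hmem : u ∈ (tieX L).filter (fun y => x₁ < y ∧ y ≤ x₂ ∧ tieW L l y) :=
            Finset.mem_filter.2 ⟨tieAt_mem_tieX (tieW_tieAt hl htw), h1', h2, htw⟩
          have := Finset.card_pos.2 ⟨u, hmem⟩
          omega
      rw [idx_const (le_of_lt hx) hno]
      exact h₂
  | succ n ih =>
      intro x₁ x₂ hcard hx htf h₁ h₂
      set T := (tieX L).filter (fun y => x₁ < y ∧ y ≤ x₂ ∧ tieW L l y) with hT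
      by_cases hne : T.Nonempty
      swap
      · exfalso
        apply h₁
        have hno : ∀ u, x₁ ≤ u → u ≤ x₂ → ¬ tieW L l u := by
          intro u h1 h2 htw
          rcases eq_or_lt_of_le h1 with h1' | h1'
          · exact htf (h1' ▸ tieW_tieAt hl htw)
          · exact hne ⟨u, Finset.mem_filter.2
              ⟨tieAt_mem_tieX (tieW_tieAt hl htw), h1', h2, htw⟩⟩
        rw [idx_const (le_of_lt hx) hno]
        exact h₂
      · set x₀ := T.max' hne with hx₀def
        have hx₀T : x₀ ∈ T := T.max'_mem hne
        have hx₀p := Finset.mem_filter.1 hx₀T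
        have hx₀1 : x₁ < x₀ := hx₀p.2.1
        have hx₀2 : x₀ ≤ x₂ := hx₀p.2.2.1
        have hx₀tw : tieW L l x₀ := hx₀p.2.2.2
        -- the abscissa u just before x₀ : either previous crossing with l, or x₁
        have hmaxle : ∀ y ∈ T, y ≤ x₀ := fun y hy => T.le_max' y hy
        obtain ⟨u, hu1, hu2, hu3⟩ :
            ∃ u, x₁ ≤ u ∧ u < x₀ ∧ ∀ y, u < y → y < x₀ → y ∉ T := by
          by_cases he : (T.erase x₀).Nonempty
          · refine ⟨(T.erase x₀).max' he, ?_, ?_, ?_⟩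
            · have hm := (T.erase x₀).max'_mem he
              have := (Finset.mem_filter.1 (Finset.mem_of_mem_erase hm)).2.1
              exact le_of_lt this
            · have hm := (T.erase x₀).max'_mem he
              have h1 := Finset.ne_of_mem_erase hm
              have h2 := hmaxle _ (Finset.mem_of_mem_erase hm)
              exact lt_of_le_of_ne h2 h1
            · intro y hy1 hy2 hyT
              have : y ∈ T.erase x₀ := Finset.mem_erase.2 ⟨ne_of_lt hy2, hyT⟩
              exact absurd ((T.erase x₀).le_max' y this) (not_le.2 hy1)
          · refine ⟨x₁, le_refl _, hx₀1, ?_⟩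
            intro y hy1 hy2 hyT
            exact he ⟨y, Finset.mem_erase.2 ⟨ne_of_lt hy2, hyT⟩⟩
        have hnomid : ∀ y, u < y → y < x₀ → ¬ tieW L l y := by
          intro y h1 h2 htw
          rcases eq_or_lt_of_le (le_trans hu1 (le_of_lt h1) : x₁ ≤ y) with h1' | h1'
          · exact htf (h1' ▸ tieW_tieAt hl htw)
          · exact hu3 y h1 h2 (Finset.mem_filter.2
              ⟨tieAt_mem_tieX (tieW_tieAt hl htw), h1', le_trans (le_of_lt h2) hx₀2, htw⟩)
        obtain ⟨xt, hxt1, hxt2, hxt3⟩ := exists_tiefree hu2 (tieX L)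
        have hxttf : ¬ tieAt L xt := not_tieAt_of_not_mem hxt3
        have hLSl := LS_left hl hxt2 (fun u' h1' h2' => hnomid u' (lt_of_lt_of_le hxt1 h1') h2')
        have hnoright : ∀ y, x₀ < y → y ≤ x₂ → ¬ tieW L l y := by
          intro y h1 h2 htw
          have : y ∈ T := Finset.mem_filter.2
            ⟨tieAt_mem_tieX (tieW_tieAt hl htw), lt_trans hx₀1 h1, h2, htw⟩
          exact absurd (hmaxle y this) (not_le.2 h1)
        have hwin : lam L (x₀, lv l x₀) ≤ idx L l x₂ ∧
            idx L l x₂ + 1 ≤ lam L (x₀, lv l x₀) + wt L (x₀, lv l x₀) := by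
          rcases eq_or_lt_of_le hx₀2 with he | hlt
          · constructor
            · rw [← he, idx_eq_lam]
            · rw [← he, idx_eq_lam]
              have := wt_pos hl x₀
              omega
          · exact LS_right hl hlt hnoright
        by_cases hcp : m ≤ idx L l xt ∧ idx L l xt < m'
        · -- recurse from x₁ to xt
          have hsubT : (tieX L).filter (fun y => x₁ < y ∧ y ≤ xt ∧ tieW L l y) ⊆
              T.erase x₀ := by
            intro y hy
            have hy' := Finset.mem_filter.1 hy
            refine Finset.mem_erase.2 ⟨?_, Finset.mem_filter.2
              ⟨hy'.1, hy'.2.1, le_trans hy'.2.2.1 (le_trans (le_of_lt hxt2) hx₀2), hy'.2.2.2⟩⟩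
            have : y ≤ xt := hy'.2.2.1
            have : y < x₀ := lt_of_le_of_lt this hxt2
            exact ne_of_lt this
          have hcard' : ((tieX L).filter (fun y => x₁ < y ∧ y ≤ xt ∧ tieW L l y)).card ≤ n := by
            have h1 := Finset.card_le_card hsubT
            have h2 := Finset.card_erase_of_mem hx₀T
            have h3 := Finset.card_pos.2 ⟨x₀, hx₀T⟩
            omega
          have hx1t : x₁ < xt := lt_of_le_of_lt hu1 hxt1
          obtain ⟨x₀', hA, hB, hC, hD, hE⟩ := ih x₁ xt hcard' hx1t htf h₁ hcp
          refine ⟨x₀', hA, le_trans hB (le_trans (le_of_lt hxt2) hx₀2), hC, hD, ?_⟩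
          intro x hxa hxb hxc
          by_cases hx1 : x ≤ xt
          · exact hE x hxa hx1 hxc
          · push_neg at hx1
            rcases lt_trichotomy x x₀ with hx2 | hx2 | hx2
            · have : idx L l x = idx L l xt := by
                symm
                apply idx_const (le_of_lt hx1)
                intro u' h1' h2'
                exact hnomid u' (lt_of_lt_of_le hxt1 h1') (lt_of_le_of_lt h2' hx2)
              rw [this]; exact hcp
            · exact absurd (hx2 ▸ tieW_tieAt hl hx₀tw) hxc
            · have : idx L l x = idx L l x₂ := by
                apply idx_const hxb
                intro u' h1' h2'
                exact hnoright u' (lt_of_lt_of_le hx2 h1') h2'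
              rw [this]; exact h₂
        · -- x₀ is the relevant crossing
          refine ⟨x₀, hx₀1, hx₀2, hx₀tw, ?_, ?_⟩
          · rcases Nat.lt_or_ge (idx L l xt) m with hcm | hcm
            · left
              constructor
              · exact lt_of_le_of_lt hLSl.1 hcm
              · have := h₂.1
                omega
            · right
              have hm' : m' ≤ idx L l xt := by
                by_contra hc
                push_neg at hc
                exact hcp ⟨hcm, hc⟩
              constructor
              · have := h₂.2
                omega
              · have := hLSl.2
                omega
          · intro x hxa hxb hxc
            have : idx L l x = idx L l x₂ := by
              apply idx_const hxb
              intro u' h1' h2'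
              exact hnoright u' (lt_of_lt_of_le hxa h1') h2'
            rw [this]; exact h₂

/-! ### bands, relevant crossings, blocks, cells -/

/-- which band (interval of length `q` of levels, with offset `s`) a level `v` lies in. -/
def bandOf (q s v : ℕ) : ℕ := if v < s then 0 else (v - s) / q + 1

/-- lower boundary of band `j`. -/
def mlo (q s j : ℕ) : ℕ := if j = 0 then 0 else s + (j - 1) * q

/-- upper boundary of band `j`. -/
def mhi (q s j : ℕ) : ℕ := s + j * q

lemma band_spec {q s : ℕ} (hq : 1 ≤ q) (v : ℕ) :
    mlo q s (bandOf q s v) ≤ v ∧ v < mhi q s (bandOf q s v) := by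
  unfold bandOf mlo mhi
  by_cases h : v < s
  · simp [h]
  · push_neg at h
    simp only [if_neg (by omega : ¬ v < s)]
    simp only [if_neg (Nat.succ_ne_zero ((v - s) / q)), Nat.add_sub_cancel]
    constructor
    · have := Nat.div_mul_le_self (v - s) q
      omega
    · have h2 : v - s < ((v - s) / q + 1) * q :=
        (Nat.div_lt_iff_lt_mul (by omega)).mp (Nat.lt_succ_self _)
      omega

lemma mhi_sub_mlo {q s j : ℕ} (hs : s ≤ q) : mhi q s j ≤ mlo q s j + q := by
  unfold mlo mhi
  by_cases h : j = 0
  · simp [h]; omega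
  · simp only [if_neg h]
    have : j * q = (j-1) * q + q := by
      cases j with
      | zero => omega
      | succ m => simp [Nat.succ_mul]
    omega

lemma bandOf_le {q s v : ℕ} (hq : 1 ≤ q) : bandOf q s v ≤ v / q + 1 := by
  unfold bandOf
  by_cases h : v < s
  · simp [h]
  · simp only [if_neg h]
    have : (v - s) / q ≤ v / q := Nat.div_le_div_right (by omega)
    omega

/-- genuine crossing points of pairs of lines of `L`. -/
def cpts (L : Finset Pt) : Finset Pt :=
  ((L ×ˢ L).filter fun q => q.1 ≠ q.2 ∧ q.1.1 ≠ q.2.1).image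
    fun q => ((q.2.2 - q.1.2) / (q.1.1 - q.2.1), lv q.1 ((q.2.2 - q.1.2) / (q.1.1 - q.2.1)))

lemma cross_mem_cpts {L : Finset Pt} {l l' : Pt} (hl : l ∈ L) (hl' : l' ∈ L) (hne : l' ≠ l)
    {x : ℝ} (hx : lv l' x = lv l x) : (x, lv l x) ∈ cpts L := by
  have hs : l.1 ≠ l'.1 := by
    intro h
    apply hne
    unfold lv at hx
    rw [h] at hx
    exact Prod.ext h.symm (by linarith)
  have hxeq : x = (l'.2 - l.2) / (l.1 - l'.1) := by
    unfold lv at hx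
    field_simp [sub_ne_zero.2 hs]
    linarith
  rw [cpts, Finset.mem_image]
  refine ⟨(l, l'), Finset.mem_filter.2 ⟨Finset.mem_product.2 ⟨hl, hl'⟩,
    ⟨fun h => hne h.symm, hs⟩⟩, ?_⟩
  simp only
  rw [← hxeq]

lemma wt_two {L : Finset Pt} {l : Pt} (hl : l ∈ L) {x : ℝ} (h : tieW L l x) :
    2 ≤ wt L (x, lv l x) := by
  obtain ⟨l', hl', hne, he⟩ := h
  have h1 : l' ∈ L.filter (fun l0 => onl l0 (x, lv l x)) :=
    Finset.mem_filter.2 ⟨hl', by simp [onl, he]⟩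
  have h2 : l ∈ L.filter (fun l0 => onl l0 (x, lv l x)) :=
    Finset.mem_filter.2 ⟨hl, rfl⟩
  exact Finset.one_lt_card.2 ⟨l', h1, l, h2, hne⟩

/-- `p` is a relevant crossing for band `j`. -/
def rel (L : Finset Pt) (q s j : ℕ) (p : Pt) : Prop :=
  2 ≤ wt L p ∧
    ((lam L p < mlo q s j ∧ mlo q s j < lam L p + wt L p) ∨
     (lam L p < mhi q s j ∧ mhi q s j < lam L p + wt L p))

/-- relevant crossings for band `j`. -/
def Xb (L : Finset Pt) (q s j : ℕ) : Finset Pt := (cpts L).filter (rel L q s j)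

/-- capped weight of a crossing. -/
def uwt (L : Finset Pt) (q : ℕ) (p : Pt) : ℕ := min (wt L p - 1) q

/-- which block of band `j` an abscissa `x` lies in (prefix sums of capped weights). -/
def kfun (L : Finset Pt) (q s j : ℕ) (x : ℝ) : ℕ :=
  (∑ p ∈ (Xb L q s j).filter (fun p => p.1 ≤ x), uwt L q p) / q

/-- the cell of a point. -/
def cellOf (L : Finset Pt) (q s : ℕ) (p : Pt) : ℕ × ℕ :=
  (bandOf q s (lam L p), kfun L q s (bandOf q s (lam L p)) p.1)

lemma kfun_mono (L : Finset Pt) (q s j : ℕ) {x y : ℝ} (hxy : x ≤ y) :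
    kfun L q s j x ≤ kfun L q s j y := by
  apply Nat.div_le_div_right
  apply Finset.sum_le_sum_of_subset
  intro p hp
  rw [Finset.mem_filter] at hp ⊢
  exact ⟨hp.1, le_trans hp.2 hxy⟩

/-- block-sum lemma: relevant crossings whose abscissa is in the block `κ` have total
capped weight at most `2q`. -/
lemma block_sum (L : Finset Pt) (q s j κ : ℕ) (hq : 1 ≤ q)
    (HX : ∀ p ∈ cpts L, ∀ p' ∈ cpts L, p.1 = p'.1 → p = p') :
    ∑ p ∈ (Xb L q s j).filter (fun p => kfun L q s j p.1 = κ), uwt L q p ≤ 2 * q := by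
  set G := (Xb L q s j).filter (fun p => kfun L q s j p.1 = κ) with hG
  rcases G.eq_empty_or_nonempty with he | hne
  · rw [he]; simp
  · obtain ⟨pmax, hpmax, hmax⟩ := G.exists_max_image Prod.fst hne
    obtain ⟨pmin, hpmin, hmin⟩ := G.exists_min_image Prod.fst hne
    set Pref : ℝ → ℕ := fun x => ∑ p ∈ (Xb L q s j).filter (fun p => p.1 ≤ x), uwt L q p
      with hPref
    have hGX : G ⊆ Xb L q s j := Finset.filter_subset _ _
    -- middle sum
    have hmid : ∑ p ∈ G, uwt L q p ≤
        ∑ p ∈ (Xb L q s j).filter (fun p => pmin.1 ≤ p.1 ∧ p.1 ≤ pmax.1), uwt L q p := by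
      apply Finset.sum_le_sum_of_subset
      intro p hp
      rw [Finset.mem_filter]
      exact ⟨hGX hp, hmin p hp, hmax p hp⟩
    -- split : {≤ pmax.1} = {< pmin.1} ⊎ {pmin.1 ≤ ∧ ≤ pmax.1}
    have hsplit : Pref pmax.1 =
        (∑ p ∈ (Xb L q s j).filter (fun p => p.1 < pmin.1), uwt L q p) +
        ∑ p ∈ (Xb L q s j).filter (fun p => pmin.1 ≤ p.1 ∧ p.1 ≤ pmax.1), uwt L q p := by
      have hset : (Xb L q s j).filter (fun p => p.1 ≤ pmax.1) =
          (Xb L q s j).filter (fun p => p.1 < pmin.1) ∪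
          (Xb L q s j).filter (fun p => pmin.1 ≤ p.1 ∧ p.1 ≤ pmax.1) := by
        ext p
        simp only [Finset.mem_filter, Finset.mem_union]
        constructor
        · rintro ⟨h1, h2⟩
          rcases lt_or_ge p.1 pmin.1 with h | h
          · exact Or.inl ⟨h1, h⟩
          · exact Or.inr ⟨h1, h, h2⟩
        · rintro (⟨h1, h2⟩ | ⟨h1, h2, h3⟩)
          · exact ⟨h1, le_trans (le_of_lt h2) (hmin pmax hpmax)⟩
          · exact ⟨h1, h3⟩
      have hdisj : Disjoint ((Xb L q s j).filter (fun p => p.1 < pmin.1))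
          ((Xb L q s j).filter (fun p => pmin.1 ≤ p.1 ∧ p.1 ≤ pmax.1)) := by
        rw [Finset.disjoint_filter]
        intro p _ h1 h2
        exact absurd h2.1 (not_le.2 h1)
      rw [hPref]
      simp only
      rw [hset, Finset.sum_union hdisj]
    -- prefix at pmin.1 is at most the strictly-below part plus pmin itself (x-injectivity)
    have hlower : Pref pmin.1 ≤
        (∑ p ∈ (Xb L q s j).filter (fun p => p.1 < pmin.1), uwt L q p) + uwt L q pmin := by
      have hsub : (Xb L q s j).filter (fun p => p.1 ≤ pmin.1) ⊆
          insert pmin ((Xb L q s j).filter (fun p => p.1 < pmin.1)) := by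
        intro p hp
        rw [Finset.mem_filter] at hp
        rcases lt_or_eq_of_le hp.2 with h | h
        · exact Finset.mem_insert_of_mem (Finset.mem_filter.2 ⟨hp.1, h⟩)
        · have : p = pmin := HX p (Finset.mem_of_mem_filter _ hp.1)
            pmin (Finset.mem_of_mem_filter _ (hGX hpmin)) h
          rw [this]; exact Finset.mem_insert_self _ _
      have hnm : pmin ∉ (Xb L q s j).filter (fun p => p.1 < pmin.1) := by
        rw [Finset.mem_filter]
        rintro ⟨_, h⟩
        exact lt_irrefl _ h
      calc Pref pmin.1 ≤ ∑ p ∈ insert pmin ((Xb L q s j).filter (fun p => p.1 < pmin.1)),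
            uwt L q p := Finset.sum_le_sum_of_subset hsub
        _ = (∑ p ∈ (Xb L q s j).filter (fun p => p.1 < pmin.1), uwt L q p) + uwt L q pmin := by
            rw [Finset.sum_insert hnm]; ring
    -- prefix values are pinned by `kfun = κ`
    have hdiv1 : Pref pmin.1 / q = κ := (Finset.mem_filter.1 hpmin).2
    have hdiv2 : Pref pmax.1 / q = κ := (Finset.mem_filter.1 hpmax).2
    have h1 := Nat.div_add_mod (Pref pmin.1) q
    have h2 := Nat.div_add_mod (Pref pmax.1) q
    have h3 : Pref pmin.1 % q < q := Nat.mod_lt _ (by omega)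
    have h4 : Pref pmax.1 % q < q := Nat.mod_lt _ (by omega)
    have h5 : uwt L q pmin ≤ q := min_le_right _ _
    rw [hdiv1] at h1
    rw [hdiv2] at h2
    omega

lemma idx_lt {L : Finset Pt} {l l' : Pt} (hl : l ∈ L) {x : ℝ} (h : lv l x < lv l' x) :
    idx L l x < idx L l' x := by
  have hsub : insert l (L.filter fun a => lv a x < lv l x) ⊆
      L.filter fun a => lv a x < lv l' x := by
    intro a ha
    rw [Finset.mem_insert] at ha
    rcases ha with h1 | h1
    · subst h1; exact Finset.mem_filter.2 ⟨hl, h⟩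
    · rw [Finset.mem_filter] at h1 ⊢
      exact ⟨h1.1, lt_trans h1.2 h⟩
  have hnm : l ∉ (L.filter fun a => lv a x < lv l x) := by
    rw [Finset.mem_filter]; rintro ⟨_, hc⟩; exact lt_irrefl _ hc
  have := Finset.card_le_card hsub
  rw [Finset.card_insert_of_notMem hnm] at this
  exact this

lemma idx_inj {L : Finset Pt} {x : ℝ} (htf : ¬ tieAt L x) :
    ∀ l ∈ L, ∀ l' ∈ L, idx L l x = idx L l' x → l = l' := by
  intro l hl l' hl' he
  by_contra hne
  have hv : lv l' x ≠ lv l x := fun h => htf ⟨l, hl, l', hl', Ne.symm hne, h⟩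
  rcases lt_or_gt_of_ne hv with h | h
  · exact absurd he (ne_of_gt (idx_lt hl' h))
  · exact absurd he (ne_of_lt (idx_lt hl h))

/-- at a tie-free abscissa at most `m' - m` lines have index in the window `[m, m')`. -/
lemma window_count {L : Finset Pt} {x : ℝ} (htf : ¬ tieAt L x) (m m' : ℕ)
    (M : Finset Pt) (hM : M ⊆ L) (hidx : ∀ l ∈ M, m ≤ idx L l x ∧ idx L l x < m') :
    M.card ≤ m' - m := by
  have hinj : Set.InjOn (fun l => idx L l x) M := by
    intro a ha b hb hab
    exact idx_inj htf a (hM ha) b (hM hb) hab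
  have h1 : M.card = (M.image (fun l => idx L l x)).card :=
    (Finset.card_image_of_injOn hinj).symm
  rw [h1]
  have h2 : M.image (fun l => idx L l x) ⊆ Finset.Ico m m' := by
    intro v hv
    rw [Finset.mem_image] at hv
    obtain ⟨l, hl, rfl⟩ := hv
    rw [Finset.mem_Ico]
    exact hidx l hl
  calc (M.image (fun l => idx L l x)).card ≤ (Finset.Ico m m').card :=
        Finset.card_le_card h2
    _ = m' - m := Nat.card_Ico m m'

/-- lines staying in the window just right of `x₀` (at tie-free points) number at most
`m' - m`. -/
lemma tail_set_bound (L : Finset Pt) (m m' : ℕ) (x₀ : ℝ) :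
    (L.filter (fun l => ∃ xb, x₀ < xb ∧ ∀ x, x₀ < x → x ≤ xb → ¬ tieAt L x →
        (m ≤ idx L l x ∧ idx L l x < m'))).card ≤ m' - m := by
  classical
  set B := L.filter (fun l => ∃ xb, x₀ < xb ∧ ∀ x, x₀ < x → x ≤ xb → ¬ tieAt L x →
      (m ≤ idx L l x ∧ idx L l x < m')) with hB
  rcases B.eq_empty_or_nonempty with he | hne
  · rw [he]; simp
  · have hch : ∀ l : Pt, ∃ xb : ℝ, l ∈ B → (x₀ < xb ∧ ∀ x, x₀ < x → x ≤ xb → ¬ tieAt L x →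
        (m ≤ idx L l x ∧ idx L l x < m')) := by
      intro l
      by_cases h : l ∈ B
      · obtain ⟨xb, h1, h2⟩ := (Finset.mem_filter.1 h).2
        exact ⟨xb, fun _ => ⟨h1, h2⟩⟩
      · exact ⟨x₀ + 1, fun hc => absurd hc h⟩
    choose f hf using hch
    obtain ⟨lmin, hlmin, hminle⟩ := B.exists_min_image f hne
    have hxm : x₀ < f lmin := (hf lmin hlmin).1
    obtain ⟨τ', hτ'1, hτ'2, hτ'3⟩ := exists_tiefree hxm (tieX L)
    have hτ'tf : ¬ tieAt L τ' := not_tieAt_of_not_mem hτ'3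
    apply window_count hτ'tf m m' B (Finset.filter_subset _ _)
    intro l hl
    exact (hf l hl).2 τ' hτ'1 (le_trans (le_of_lt hτ'2) (hminle l hl)) hτ'tf

/-- The key cell bound: at most `20q` lines pass through points of one cell. -/
lemma cell_lines_bound (L : Finset Pt) (q s j κ : ℕ)
    (HX : ∀ p ∈ cpts L, ∀ p' ∈ cpts L, p.1 = p'.1 → p = p')
    (hq : 1 ≤ q) (hs : s ≤ q) (Pc : Finset Pt)
    (hPc : ∀ p ∈ Pc, bandOf q s (lam L p) = j ∧ kfun L q s j p.1 = κ ∧ wt L p ≤ 4 * q) :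
    (L.filter (fun l => ∃ p ∈ Pc, onl l p)).card ≤ 20 * q := by
  classical
  set Lc := L.filter (fun l => ∃ p ∈ Pc, onl l p) with hLc
  rcases Pc.eq_empty_or_nonempty with hPce | hPcne
  · have : Lc = ∅ := by
      rw [hLc, hPce]
      simp
    rw [this]; simp
  · have hWitne : (Pc.image Prod.fst).Nonempty := hPcne.image _
    set astar := (Pc.image Prod.fst).min' hWitne with ha
    have hastar_mem : astar ∈ Pc.image Prod.fst := Finset.min'_mem _ _
    have hastar_le : ∀ p ∈ Pc, astar ≤ p.1 :=
      fun p hp => Finset.min'_le _ _ (Finset.mem_image_of_mem _ hp)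
    have hkast : kfun L q s j astar = κ := by
      obtain ⟨pa, hpa, hpaeq⟩ := Finset.mem_image.1 hastar_mem
      rw [← hpaeq]
      exact (hPc pa hpa).2.1
    set D := (Xb L q s j).image Prod.fst ∪ tieX L with hD
    obtain ⟨τ, hτlt, hτtf, hτD⟩ :
        ∃ τ, τ < astar ∧ ¬ tieAt L τ ∧ ∀ d ∈ D, τ < d → astar ≤ d := by
      by_cases hne2 : (D.filter (fun d => d < astar)).Nonempty
      · set dm := (D.filter (fun d => d < astar)).max' hne2 with hdm
        have hdmm := Finset.mem_filter.1 ((D.filter (fun d => d < astar)).max'_mem hne2)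
        refine ⟨(dm + astar)/2, by rw [hdm]; linarith [hdmm.2], ?_, ?_⟩
        · intro hc
          have h1 : (dm + astar)/2 ∈ D := Finset.mem_union_right _ (tieAt_mem_tieX hc)
          have h2 : (dm + astar)/2 < astar := by rw [hdm]; linarith [hdmm.2]
          have h3 := (D.filter (fun d => d < astar)).le_max' _ (Finset.mem_filter.2 ⟨h1, h2⟩)
          rw [← hdm] at h3
          have : dm < (dm + astar)/2 := by rw [hdm]; linarith [hdmm.2]
          linarith
        · intro d hd hlt
          by_contra hc
          push_neg at hc
          have h3 := (D.filter (fun d => d < astar)).le_max' _ (Finset.mem_filter.2 ⟨hd, hc⟩)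
          rw [← hdm] at h3
          have : dm < (dm + astar)/2 := by rw [hdm]; linarith [hdmm.2]
          linarith
      · refine ⟨astar - 1, by linarith, ?_, ?_⟩
        · intro hc
          exact hne2 ⟨astar - 1, Finset.mem_filter.2
            ⟨Finset.mem_union_right _ (tieAt_mem_tieX hc), by linarith⟩⟩
        · intro d hd _
          by_contra hc
          push_neg at hc
          exact hne2 ⟨d, Finset.mem_filter.2 ⟨hd, hc⟩⟩
    set m := mlo q s j with hm
    set m' := mhi q s j with hm'
    have hwq : m' ≤ m + q := mhi_sub_mlo hs
    set base := Lc.filter (fun l => m ≤ idx L l τ ∧ idx L l τ < m') with hbase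
    set rest := Lc.filter (fun l => ¬ (m ≤ idx L l τ ∧ idx L l τ < m')) with hrest
    have hsplitc : base.card + rest.card = Lc.card :=
      Finset.card_filter_add_card_filter_not _
    have hbaseb : base.card ≤ q := by
      have h1 := window_count hτtf m m' base
        (le_trans (le_of_eq hbase) (Finset.filter_subset _ _) |>.trans'
          (le_refl _) |>.trans (Finset.filter_subset _ _))
        (fun l hl => (Finset.mem_filter.1 hl).2)
      omega
    set Xκ := (Xb L q s j).filter (fun p => kfun L q s j p.1 = κ) with hXκ
    set AB : Pt → Finset Pt := fun p₀ =>
      (if p₀ ∈ Pc then L.filter (fun l => onl l p₀) else ∅) ∪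
      (L.filter (fun l => onl l p₀ ∧ ∃ xb, p₀.1 < xb ∧ ∀ x, p₀.1 < x → x ≤ xb →
        ¬ tieAt L x → (m ≤ idx L l x ∧ idx L l x < m'))) with hAB
    have hcover : rest ⊆ Xκ.biUnion AB := by
      intro l hl
      obtain ⟨hlLc, hlnw⟩ := Finset.mem_filter.1 hl
      obtain ⟨hlL, hex⟩ := Finset.mem_filter.1 hlLc
      obtain ⟨p, hp, hop⟩ := hex
      have hband := (hPc p hp).1
      have hwin : m ≤ idx L l p.1 ∧ idx L l p.1 < m' := by
        rw [← lam_eq_idx hop, hm, hm']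
        have hbs := band_spec (s := s) hq (lam L p)
        rw [hband] at hbs
        exact hbs
      have hτp : τ < p.1 := lt_of_lt_of_le hτlt (hastar_le p hp)
      obtain ⟨x₀, hx₀1, hx₀2, hx₀tw, hx₀rel, hx₀tail⟩ :=
        walk hlL m m'
          (((tieX L).filter (fun y => τ < y ∧ y ≤ p.1 ∧ tieW L l y)).card)
          τ p.1 le_rfl hτp hτtf hlnw hwin
      set p₀ : Pt := (x₀, lv l x₀) with hp₀
      have hop₀ : onl l p₀ := rfl
      obtain ⟨l', hl', hnel, heql⟩ := hx₀tw
      have hp₀cp : p₀ ∈ cpts L := cross_mem_cpts hlL hl' hnel heql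
      have hp₀rel : rel L q s j p₀ := ⟨wt_two hlL ⟨l', hl', hnel, heql⟩, hx₀rel⟩
      have hp₀X : p₀ ∈ Xb L q s j := Finset.mem_filter.2 ⟨hp₀cp, hp₀rel⟩
      have hx₀D : x₀ ∈ D := by
        rw [hD]
        exact Finset.mem_union_left _ (Finset.mem_image.2 ⟨p₀, hp₀X, rfl⟩)
      have hax₀ : astar ≤ x₀ := hτD x₀ hx₀D hx₀1
      have hkx₀ : kfun L q s j x₀ = κ := by
        apply le_antisymm
        · calc kfun L q s j x₀ ≤ kfun L q s j p.1 := kfun_mono _ _ _ _ hx₀2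
            _ = κ := (hPc p hp).2.1
        · calc κ = kfun L q s j astar := hkast.symm
            _ ≤ kfun L q s j x₀ := kfun_mono _ _ _ _ hax₀
      have hp₀κ : p₀ ∈ Xκ := Finset.mem_filter.2 ⟨hp₀X, hkx₀⟩
      refine Finset.mem_biUnion.2 ⟨p₀, hp₀κ, ?_⟩
      rcases eq_or_lt_of_le hx₀2 with heq2 | hlt2
      · have hpp : p = p₀ := onl_same_x hop hop₀ heq2.symm
        apply Finset.mem_union_left
        rw [if_pos (hpp ▸ hp)]
        exact Finset.mem_filter.2 ⟨hlL, hpp ▸ hop⟩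
      · apply Finset.mem_union_right
        exact Finset.mem_filter.2 ⟨hlL, hop₀, p.1, hlt2, hx₀tail⟩
    have hABcard : ∀ p₀ ∈ Xκ, (AB p₀).card ≤ 5 * uwt L q p₀ := by
      intro p₀ hp₀
      have hw2 : 2 ≤ wt L p₀ := (Finset.mem_filter.1 (Finset.mem_filter.1 hp₀).1).2.1
      have hwA : (if p₀ ∈ Pc then L.filter (fun l => onl l p₀) else ∅).card ≤
          min (wt L p₀) (4 * q) := by
        split_ifs with h
        · exact le_min (le_of_eq rfl) ((hPc p₀ h).2.2)
        · simp
      have hwB1 : (L.filter (fun l => onl l p₀ ∧ ∃ xb, p₀.1 < xb ∧ ∀ x, p₀.1 < x → x ≤ xb →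
          ¬ tieAt L x → (m ≤ idx L l x ∧ idx L l x < m'))).card ≤ wt L p₀ := by
        apply Finset.card_le_card
        intro a ha
        rw [Finset.mem_filter] at ha ⊢
        exact ⟨ha.1, ha.2.1⟩
      have hwB2 : (L.filter (fun l => onl l p₀ ∧ ∃ xb, p₀.1 < xb ∧ ∀ x, p₀.1 < x → x ≤ xb →
          ¬ tieAt L x → (m ≤ idx L l x ∧ idx L l x < m'))).card ≤ m' - m := by
        apply le_trans (Finset.card_le_card ?_) (tail_set_bound L m m' p₀.1)
        intro a ha
        rw [Finset.mem_filter] at ha ⊢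
        exact ⟨ha.1, ha.2.2⟩
      have hcu : (AB p₀).card ≤
          (if p₀ ∈ Pc then L.filter (fun l => onl l p₀) else ∅).card +
          (L.filter (fun l => onl l p₀ ∧ ∃ xb, p₀.1 < xb ∧ ∀ x, p₀.1 < x → x ≤ xb →
            ¬ tieAt L x → (m ≤ idx L l x ∧ idx L l x < m'))).card := by
        simp only [hAB]
        exact Finset.card_union_le _ _
      rw [uwt]
      rcases le_or_gt (wt L p₀ - 1) q with hc | hc
      · rw [min_eq_left hc]
        have := min_le_left (wt L p₀) (4 * q)
        omega
      · rw [min_eq_right (le_of_lt hc)]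
        have := min_le_right (wt L p₀) (4 * q)
        omega
    have hrestb : rest.card ≤ 10 * q := by
      calc rest.card ≤ (Xκ.biUnion AB).card := Finset.card_le_card hcover
        _ ≤ ∑ p₀ ∈ Xκ, (AB p₀).card := Finset.card_biUnion_le
        _ ≤ ∑ p₀ ∈ Xκ, 5 * uwt L q p₀ := Finset.sum_le_sum hABcard
        _ = 5 * ∑ p₀ ∈ Xκ, uwt L q p₀ := by rw [Finset.mul_sum]
        _ ≤ 5 * (2 * q) := by
            have hbs := block_sum L q s j κ hq HX
            rw [hXκ]
            omega
        _ = 10 * q := by ring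
    omega

/-- any family of lines through pairwise-distinct points: sum of `w(w-1)` is at most `N(N-1)`. -/
lemma sum_wt_mul_le (L : Finset Pt) (T : Finset Pt) :
    ∑ p ∈ T, wt L p * (wt L p - 1) ≤ L.card * (L.card - 1) := by
  apply sum_mul_sub_one_le T (fun p => L.filter (fun l => onl l p)) L
    (fun p _ => Finset.filter_subset _ _)
  intro p _ p' _ hne l hl1 hl2 l' hl1' hl2'
  rw [Finset.mem_filter] at hl1 hl2 hl1' hl2'
  by_cases hx : p.1 = p'.1
  · exact absurd (onl_same_x hl1.2 hl2.2 hx) hne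
  · exact line_unique hl1.2 hl2.2 hl1'.2 hl2'.2 hx

/-- dual: distinct lines share at most one point. -/
lemma sum_pts_mul_le (L' : Finset Pt) (Q : Finset Pt) :
    ∑ l ∈ L', (Q.filter (fun p => onl l p)).card * ((Q.filter (fun p => onl l p)).card - 1) ≤
      Q.card * (Q.card - 1) := by
  apply sum_mul_sub_one_le L' (fun l => Q.filter (fun p => onl l p)) Q
    (fun l _ => Finset.filter_subset _ _)
  intro l _ l' _ hne p hp1 hp2 p' hp1' hp2'
  rw [Finset.mem_filter] at hp1 hp2 hp1' hp2'
  by_contra hpp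
  by_cases hx : p.1 = p'.1
  · exact hpp (onl_same_x hp1.2 hp1'.2 hx)
  · exact hne (line_unique hp1.2 hp1'.2 hp2.2 hp2'.2 hx)

lemma shift_inj {q s s' a b : ℕ} (hq : 1 ≤ q) (hs : s < q) (hs' : s' < q)
    (h : s + a * q = s' + b * q) : s = s' ∧ a = b := by
  have h1 : (s + a * q) % q = s := by
    rw [Nat.add_mul_mod_self_right, Nat.mod_eq_of_lt hs]
  have h2 : (s' + b * q) % q = s' := by
    rw [Nat.add_mul_mod_self_right, Nat.mod_eq_of_lt hs']
  have hss : s = s' := by rw [← h1, ← h2, h]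
  refine ⟨hss, ?_⟩
  have : a * q = b * q := by omega
  exact Nat.eq_of_mul_eq_mul_right (by omega) this

/-- a crossing point is relevant for at most `2 (w - 1)` pairs (shift, band). -/
lemma rel_count (L : Finset Pt) (q B : ℕ) (hq : 1 ≤ q) (p : Pt) :
    (((Finset.range q) ×ˢ (Finset.range B)).filter
      (fun sj => rel L q sj.1 sj.2 p)).card ≤ 2 * (wt L p - 1) := by
  classical
  set v := lam L p
  set w := wt L p
  have hsub : ∀ sj ∈ ((Finset.range q) ×ˢ (Finset.range B)).filter
      (fun sj => rel L q sj.1 sj.2 p),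
      (if v < mlo q sj.1 sj.2 ∧ mlo q sj.1 sj.2 < v + w then ((false : Bool), mlo q sj.1 sj.2)
       else (true, mhi q sj.1 sj.2)) ∈
      (Finset.univ : Finset Bool) ×ˢ (Finset.Ioo v (v + w)) := by
    intro sj hsj
    have hrel := (Finset.mem_filter.1 hsj).2
    split_ifs with hcase
    · rw [Finset.mem_product, Finset.mem_Ioo]
      exact ⟨Finset.mem_univ _, hcase⟩
    · rw [Finset.mem_product, Finset.mem_Ioo]
      rcases hrel.2 with h | h
      · exact absurd h hcase
      · exact ⟨Finset.mem_univ _, h⟩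
  have hinj : ∀ sj ∈ ((Finset.range q) ×ˢ (Finset.range B)).filter
      (fun sj => rel L q sj.1 sj.2 p), ∀ sj' ∈ ((Finset.range q) ×ˢ (Finset.range B)).filter
      (fun sj => rel L q sj.1 sj.2 p),
      (if v < mlo q sj.1 sj.2 ∧ mlo q sj.1 sj.2 < v + w then ((false : Bool), mlo q sj.1 sj.2)
       else (true, mhi q sj.1 sj.2)) =
      (if v < mlo q sj'.1 sj'.2 ∧ mlo q sj'.1 sj'.2 < v + w then ((false : Bool), mlo q sj'.1 sj'.2)
       else (true, mhi q sj'.1 sj'.2)) → sj = sj' := by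
    intro sj hsj sj' hsj' heq
    have hr1 := Finset.mem_product.1 (Finset.mem_filter.1 hsj).1
    have hr2 := Finset.mem_product.1 (Finset.mem_filter.1 hsj').1
    have hs1 : sj.1 < q := Finset.mem_range.1 hr1.1
    have hs2 : sj'.1 < q := Finset.mem_range.1 hr2.1
    split_ifs at heq with h1 h2 h2
    · -- both mlo
      have hml : mlo q sj.1 sj.2 = mlo q sj'.1 sj'.2 := by
        have := congrArg Prod.snd heq; simpa using this
      have hj1 : sj.2 ≠ 0 := by
        intro hc
        rw [mlo, if_pos hc] at h1
        omega
      have hj2 : sj'.2 ≠ 0 := by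
        intro hc
        rw [mlo, if_pos hc] at h2
        omega
      rw [mlo, if_neg hj1, mlo, if_neg hj2] at hml
      obtain ⟨ha, hb⟩ := shift_inj hq hs1 hs2 hml
      have : sj.2 = sj'.2 := by omega
      exact Prod.ext ha this
    · simp at heq
    · simp at heq
    · have hml : mhi q sj.1 sj.2 = mhi q sj'.1 sj'.2 := by
        have := congrArg Prod.snd heq; simpa using this
      rw [mhi, mhi] at hml
      obtain ⟨ha, hb⟩ := shift_inj hq hs1 hs2 hml
      exact Prod.ext ha hb
  have hcard := Finset.card_le_card_of_injOn _ hsub hinj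
  calc (((Finset.range q) ×ˢ (Finset.range B)).filter
      (fun sj => rel L q sj.1 sj.2 p)).card
      ≤ ((Finset.univ : Finset Bool) ×ˢ (Finset.Ioo v (v + w))).card := hcard
    _ = 2 * (w - 1) := by
        rw [Finset.card_product, Nat.card_Ioo, Finset.card_univ, Fintype.card_bool]
        omega

/-- choose a good shift `s`: total capped weight of relevant crossings over all bands
is at most `2 N² / q`. -/
lemma exists_shift (L : Finset Pt) (q B : ℕ) (hq : 1 ≤ q) :
    ∃ s < q, q * (∑ j ∈ Finset.range B, ∑ p ∈ Xb L q s j, uwt L q p) ≤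
      2 * L.card * L.card := by
  classical
  set W : ℕ → ℕ := fun s => ∑ j ∈ Finset.range B, ∑ p ∈ Xb L q s j, uwt L q p with hW
  suffices htot : ∑ s ∈ Finset.range q, W s ≤ 2 * L.card * L.card by
    obtain ⟨s0, hs0, hmin⟩ := (Finset.range q).exists_min_image W
      ⟨0, Finset.mem_range.2 (by omega)⟩
    refine ⟨s0, Finset.mem_range.1 hs0, ?_⟩
    calc q * W s0 = ∑ _s ∈ Finset.range q, W s0 := by
          rw [Finset.sum_const, Finset.card_range, smul_eq_mul]
      _ ≤ ∑ s ∈ Finset.range q, W s := Finset.sum_le_sum (fun i hi => hmin i hi)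
      _ ≤ _ := htot
  have hstep : ∀ s, W s = ∑ p ∈ cpts L,
      ∑ j ∈ Finset.range B, (if rel L q s j p then uwt L q p else 0) := by
    intro s
    rw [hW]
    simp only
    rw [Finset.sum_comm]
    congr 1
    ext j
    rw [Xb, Finset.sum_filter]
  calc ∑ s ∈ Finset.range q, W s
      = ∑ s ∈ Finset.range q, ∑ p ∈ cpts L,
          ∑ j ∈ Finset.range B, (if rel L q s j p then uwt L q p else 0) := by
        apply Finset.sum_congr rfl
        intro s _
        exact hstep s
    _ = ∑ p ∈ cpts L, ∑ s ∈ Finset.range q,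
          ∑ j ∈ Finset.range B, (if rel L q s j p then uwt L q p else 0) :=
        Finset.sum_comm
    _ ≤ ∑ p ∈ cpts L, 2 * (wt L p - 1) * (wt L p - 1) := by
        apply Finset.sum_le_sum
        intro p _
        have h1 : ∑ s ∈ Finset.range q, ∑ j ∈ Finset.range B,
            (if rel L q s j p then uwt L q p else 0) =
            ∑ sj ∈ ((Finset.range q) ×ˢ (Finset.range B)).filter
              (fun sj => rel L q sj.1 sj.2 p), uwt L q p := by
          rw [Finset.sum_filter, Finset.sum_product]
        rw [h1, Finset.sum_const, smul_eq_mul]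
        have h2 := rel_count L q B hq p
        have h3 : uwt L q p ≤ wt L p - 1 := min_le_left _ _
        calc (((Finset.range q) ×ˢ (Finset.range B)).filter
            (fun sj => rel L q sj.1 sj.2 p)).card * uwt L q p
            ≤ (2 * (wt L p - 1)) * (wt L p - 1) :=
              Nat.mul_le_mul h2 h3
          _ = 2 * (wt L p - 1) * (wt L p - 1) := by ring
    _ ≤ ∑ p ∈ cpts L, 2 * (wt L p * (wt L p - 1)) := by
        apply Finset.sum_le_sum
        intro p _
        have : wt L p - 1 ≤ wt L p := by omega
        calc 2 * (wt L p - 1) * (wt L p - 1) = 2 * ((wt L p - 1) * (wt L p - 1)) := by ring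
          _ ≤ 2 * (wt L p * (wt L p - 1)) := by
              apply Nat.mul_le_mul_left
              exact Nat.mul_le_mul_right _ this
    _ = 2 * ∑ p ∈ cpts L, wt L p * (wt L p - 1) := by rw [Finset.mul_sum]
    _ ≤ 2 * (L.card * (L.card - 1)) := by
        have := sum_wt_mul_le L (cpts L)
        omega
    _ ≤ 2 * L.card * L.card := by
        have h1 : L.card * (L.card - 1) ≤ L.card * L.card :=
          Nat.mul_le_mul_left _ (by omega)
        have h2 : 2 * L.card * L.card = 2 * (L.card * L.card) := by ring
        omega

lemma nat_div_add_div_le (a b q : ℕ) (hq : 1 ≤ q) : a / q + b / q ≤ (a + b) / q := by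
  rw [Nat.le_div_iff_mul_le (by omega : 0 < q)]
  have h1 := Nat.div_mul_le_self a q
  have h2 := Nat.div_mul_le_self b q
  calc (a / q + b / q) * q = a / q * q + b / q * q := by ring
    _ ≤ a + b := by omega

lemma nat_sum_div_le {α : Type*} (s : Finset α) (f : α → ℕ) (q : ℕ) (hq : 1 ≤ q) :
    ∑ a ∈ s, f a / q ≤ (∑ a ∈ s, f a) / q := by
  classical
  induction s using Finset.induction_on with
  | empty => simp
  | @insert a s hnotmem ih =>
      rw [Finset.sum_insert hnotmem, Finset.sum_insert hnotmem]
      exact le_trans (Nat.add_le_add_left ih _) (nat_div_add_div_le _ _ _ hq)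

lemma incidence_eq (L Q : Finset Pt) :
    ∑ p ∈ Q, wt L p = ∑ l ∈ L, (Q.filter (fun p => onl l p)).card := by
  unfold wt
  calc ∑ p ∈ Q, (L.filter (fun l => onl l p)).card
      = ∑ p ∈ Q, ∑ l ∈ L, if onl l p then 1 else 0 := by
        apply Finset.sum_congr rfl; intros; rw [Finset.card_filter]
    _ = ∑ l ∈ L, ∑ p ∈ Q, if onl l p then 1 else 0 := Finset.sum_comm
    _ = ∑ l ∈ L, (Q.filter (fun p => onl l p)).card := by
        apply Finset.sum_congr rfl; intros; rw [Finset.card_filter]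

lemma sq_nat_eq (a : ℕ) : a * a = a + a * (a - 1) := by
  cases a with
  | zero => rfl
  | succ m => simp [Nat.succ_mul, Nat.mul_succ]; ring

/-- in-cell Kővári–Sós–Turán-type bound. -/
lemma cell_incidence (L Pc : Finset Pt) :
    ((∑ p ∈ Pc, wt L p : ℕ) : ℝ) ≤
      ((L.filter (fun l => ∃ p ∈ Pc, onl l p)).card : ℝ) +
      (Pc.card : ℝ) * Real.sqrt ((L.filter (fun l => ∃ p ∈ Pc, onl l p)).card) := by
  classical
  set Lc := L.filter (fun l => ∃ p ∈ Pc, onl l p) with hLcdef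
  set a : Pt → ℕ := fun l => (Pc.filter (fun p => onl l p)).card with ha
  have h1 : ∑ p ∈ Pc, wt L p = ∑ l ∈ L, a l := incidence_eq L Pc
  have h2 : ∑ l ∈ Lc, a l = ∑ l ∈ L, a l := by
    apply Finset.sum_subset (Finset.filter_subset _ _)
    intro l hl hnl
    rw [ha]
    by_contra hc
    have : (Pc.filter (fun p => onl l p)).Nonempty := by
      rw [Finset.nonempty_iff_ne_empty]
      intro he
      apply hc
      simp only
      rw [he]
      simp
    obtain ⟨p, hp⟩ := this
    rw [Finset.mem_filter] at hp
    exact hnl (Finset.mem_filter.2 ⟨hl, ⟨p, hp.1, hp.2⟩⟩)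
  set J := ∑ l ∈ Lc, a l with hJ
  have hCS : ((J : ℝ)) ^ 2 ≤ (Lc.card : ℝ) * ∑ l ∈ Lc, ((a l : ℝ)) ^ 2 := by
    have := Finset.sum_mul_sq_le_sq_mul_sq Lc (fun _ => (1:ℝ)) (fun l => (a l : ℝ))
    simp only [one_pow, one_mul, Finset.sum_const, smul_eq_mul, mul_one] at this
    calc ((J : ℝ)) ^ 2 = (∑ l ∈ Lc, (a l : ℝ)) ^ 2 := by rw [hJ]; push_cast; ring_nf
      _ ≤ (∑ l ∈ Lc, (1:ℝ)) * ∑ l ∈ Lc, ((a l : ℝ)) ^ 2 := by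
          simpa using this
      _ = (Lc.card : ℝ) * ∑ l ∈ Lc, ((a l : ℝ)) ^ 2 := by
          rw [Finset.sum_const, nsmul_eq_mul, mul_one]
  have hsq : ∑ l ∈ Lc, ((a l : ℝ)) ^ 2 ≤ (J : ℝ) + (Pc.card : ℝ) ^ 2 := by
    have hA : ∀ l, (a l) * (a l) = a l + a l * (a l - 1) := fun l => sq_nat_eq (a l)
    have hB : ∑ l ∈ Lc, a l * (a l - 1) ≤ Pc.card * (Pc.card - 1) := sum_pts_mul_le Lc Pc
    have hN : ∑ l ∈ Lc, a l * a l ≤ J + Pc.card * (Pc.card - 1) := by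
      calc ∑ l ∈ Lc, a l * a l = ∑ l ∈ Lc, (a l + a l * (a l - 1)) := by
            apply Finset.sum_congr rfl; intros l _; exact hA l
        _ = J + ∑ l ∈ Lc, a l * (a l - 1) := by rw [Finset.sum_add_distrib, hJ]
        _ ≤ J + Pc.card * (Pc.card - 1) := by omega
    calc ∑ l ∈ Lc, ((a l : ℝ)) ^ 2 = ((∑ l ∈ Lc, a l * a l : ℕ) : ℝ) := by
          push_cast; apply Finset.sum_congr rfl; intros; ring
      _ ≤ ((J + Pc.card * (Pc.card - 1) : ℕ) : ℝ) := by exact_mod_cast hN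
      _ ≤ (J : ℝ) + (Pc.card : ℝ) ^ 2 := by
          have h3 : ((Pc.card * (Pc.card - 1) : ℕ) : ℝ) ≤ (Pc.card : ℝ) ^ 2 := by
            have h4 : (Pc.card * (Pc.card - 1) : ℕ) ≤ Pc.card * Pc.card :=
              Nat.mul_le_mul_left _ (by omega)
            calc ((Pc.card * (Pc.card - 1) : ℕ) : ℝ) ≤ ((Pc.card * Pc.card : ℕ) : ℝ) := by
                  exact_mod_cast h4
              _ = (Pc.card : ℝ) ^ 2 := by push_cast; ring
          calc ((J + Pc.card * (Pc.card - 1) : ℕ) : ℝ)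
              = (J : ℝ) + ((Pc.card * (Pc.card - 1) : ℕ) : ℝ) := by push_cast; ring
            _ ≤ (J : ℝ) + (Pc.card : ℝ) ^ 2 := by linarith
  have hq : ((J:ℝ)) ^ 2 ≤ (Lc.card : ℝ) * (J : ℝ) + (Lc.card : ℝ) * (Pc.card : ℝ) ^ 2 := by
    calc ((J:ℝ))^2 ≤ (Lc.card : ℝ) * ∑ l ∈ Lc, ((a l : ℝ))^2 := hCS
      _ ≤ (Lc.card : ℝ) * ((J : ℝ) + (Pc.card : ℝ)^2) := by
          apply mul_le_mul_of_nonneg_left hsq (by positivity)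
      _ = _ := by ring
  have := quad_bound (x := (J:ℝ)) (a := (Lc.card : ℝ)) (b := (Pc.card : ℝ))
    (by positivity) (by positivity) hq
  calc ((∑ p ∈ Pc, wt L p : ℕ) : ℝ) = (J : ℝ) := by
        exact_mod_cast congrArg (Nat.cast : ℕ → ℝ) (h1.trans h2.symm)
    _ ≤ (Lc.card : ℝ) + (Pc.card : ℝ) * Real.sqrt (Lc.card) := by
        rw [mul_comm] at this ⊢
        exact this

/-- trivial bound via pairs of points : `N r (r-1) ≤ n (n-1)`. -/
lemma pair_bound (L P : Finset Pt) (r : ℕ)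
    (hrich : ∀ l ∈ L, r ≤ (P.filter (fun p => onl l p)).card) :
    L.card * (r * (r - 1)) ≤ P.card * (P.card - 1) := by
  calc L.card * (r * (r-1)) = ∑ _l ∈ L, r * (r-1) := by
        rw [Finset.sum_const, smul_eq_mul]
    _ ≤ ∑ l ∈ L, (P.filter (fun p => onl l p)).card * ((P.filter (fun p => onl l p)).card - 1) := by
        apply Finset.sum_le_sum
        intro l hl
        have := hrich l hl
        exact Nat.mul_le_mul this (by omega)
    _ ≤ P.card * (P.card - 1) := sum_pts_mul_le L P

/-- dual easy bound used when `r² > 2n` : `N ≤ 4 n / r`. -/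
lemma high_r_bound (L P : Finset Pt) (r : ℕ) (hr : 1 ≤ r)
    (hrich : ∀ l ∈ L, r ≤ (P.filter (fun p => onl l p)).card)
    (hbig : 2 * P.card < r * r) :
    (L.card : ℝ) * r ≤ 4 * P.card := by
  classical
  set x := ∑ p ∈ P, wt L p with hx
  have hI : L.card * r ≤ x := by
    rw [hx, incidence_eq]
    calc L.card * r = ∑ _l ∈ L, r := by rw [Finset.sum_const, smul_eq_mul]
      _ ≤ _ := Finset.sum_le_sum hrich
  -- Cauchy–Schwarz : x² ≤ n (x + N²)
  have hCS : ((x:ℝ)) ^ 2 ≤ (P.card : ℝ) * ((x : ℝ) + (L.card : ℝ)^2) := by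
    have h1 := Finset.sum_mul_sq_le_sq_mul_sq P (fun _ => (1:ℝ)) (fun p => (wt L p : ℝ))
    simp only [one_pow, one_mul, Finset.sum_const, smul_eq_mul, mul_one] at h1
    have h2 : ∑ p ∈ P, ((wt L p : ℝ))^2 ≤ (x : ℝ) + (L.card : ℝ)^2 := by
      have hA : ∑ p ∈ P, wt L p * wt L p ≤ x + L.card * (L.card - 1) := by
        calc ∑ p ∈ P, wt L p * wt L p = ∑ p ∈ P, (wt L p + wt L p * (wt L p - 1)) := by
              apply Finset.sum_congr rfl; intros p _; exact sq_nat_eq _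
          _ = x + ∑ p ∈ P, wt L p * (wt L p - 1) := by rw [Finset.sum_add_distrib, hx]
          _ ≤ x + L.card * (L.card - 1) := by
              have := sum_wt_mul_le L P
              omega
      calc ∑ p ∈ P, ((wt L p : ℝ))^2 = ((∑ p ∈ P, wt L p * wt L p : ℕ) : ℝ) := by
            push_cast; apply Finset.sum_congr rfl; intros; ring
        _ ≤ ((x + L.card * (L.card - 1) : ℕ) : ℝ) := by exact_mod_cast hA
        _ ≤ (x : ℝ) + (L.card : ℝ)^2 := by
            have h5 : ((L.card * (L.card - 1) : ℕ) : ℝ) ≤ (L.card : ℝ)^2 := by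
              have h3 : (L.card * (L.card - 1) : ℕ) ≤ L.card * L.card :=
                Nat.mul_le_mul_left _ (by omega)
              calc ((L.card * (L.card - 1) : ℕ) : ℝ) ≤ ((L.card * L.card : ℕ) : ℝ) := by
                    exact_mod_cast h3
                _ = (L.card : ℝ)^2 := by push_cast; ring
            calc ((x + L.card * (L.card - 1) : ℕ) : ℝ)
                = (x : ℝ) + ((L.card * (L.card - 1) : ℕ) : ℝ) := by push_cast; ring
              _ ≤ (x : ℝ) + (L.card : ℝ)^2 := by linarith
    calc ((x:ℝ))^2 = (∑ p ∈ P, (wt L p : ℝ))^2 := by rw [hx]; push_cast; ring_nf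
      _ ≤ (∑ p ∈ P, (1:ℝ)) * ∑ p ∈ P, ((wt L p : ℝ))^2 := by simpa using h1
      _ = (P.card : ℝ) * ∑ p ∈ P, ((wt L p : ℝ))^2 := by
          rw [Finset.sum_const, nsmul_eq_mul, mul_one]
      _ ≤ (P.card : ℝ) * ((x : ℝ) + (L.card : ℝ)^2) := by
          apply mul_le_mul_of_nonneg_left h2 (by positivity)
  have hqb := quad_bound (x := (x:ℝ)) (a := (P.card:ℝ)) (b := (L.card : ℝ))
    (by positivity) (by positivity) (by nlinarith [hCS])
  -- combine : N r ≤ x ≤ n + N √n and 2n < r²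
  set u := Real.sqrt (P.card) with hu
  have hu2 : u^2 = (P.card : ℝ) := Real.sq_sqrt (by positivity)
  have hun : (0:ℝ) ≤ u := Real.sqrt_nonneg _
  have hNr : (L.card : ℝ) * r ≤ (x : ℝ) := by exact_mod_cast hI
  have hx2 : (x : ℝ) ≤ u^2 + (L.card : ℝ) * u := by
    rw [hu2]
    exact hqb
  have hrr : 2 * u^2 ≤ (r:ℝ)^2 := by
    rw [hu2]
    have : (2 * P.card : ℕ) < (r * r : ℕ) := hbig
    have := (Nat.cast_lt (α := ℝ)).2 this
    push_cast at this
    nlinarith [this]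
  have hrpos : (0:ℝ) < r := by exact_mod_cast hr
  have hN0 : (0:ℝ) ≤ (L.card : ℝ) := by positivity
  have hA2 : (0:ℝ) ≤ u^2 + (L.card:ℝ)*u - (L.card:ℝ)*r := by nlinarith [hNr, hx2]
  have h34 : 4*u ≤ 3*(r:ℝ) := by
    by_contra hc
    push_neg at hc
    have h9 : 9*(r:ℝ)^2 < 16*u^2 := by nlinarith [hrpos.le, hun]
    nlinarith [hrr]
  have hfin : (L.card : ℝ) * r * r ≤ 4 * u^2 * r := by
    nlinarith [mul_nonneg hA2 (by positivity : (0:ℝ) ≤ 4*(r:ℝ)),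
      mul_nonneg (mul_nonneg hN0 hrpos.le) (by linarith : (0:ℝ) ≤ 3*(r:ℝ) - 4*u)]
  have hfin2 : (L.card : ℝ) * r ≤ 4 * u^2 :=
    le_of_mul_le_mul_right (by nlinarith [hfin]) hrpos
  rw [hu2] at hfin2
  linarith

/-- Cauchy–Schwarz bound for total degree over a point set. -/
lemma sum_wt_cs (L T : Finset Pt) :
    ((∑ p ∈ T, wt L p : ℕ) : ℝ) ≤ (T.card : ℝ) + (L.card : ℝ) * Real.sqrt (T.card) := by
  classical
  set x := ∑ p ∈ T, wt L p with hx
  have hCS : ((x:ℝ)) ^ 2 ≤ (T.card : ℝ) * ((x : ℝ) + (L.card : ℝ)^2) := by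
    have h1 := Finset.sum_mul_sq_le_sq_mul_sq T (fun _ => (1:ℝ)) (fun p => (wt L p : ℝ))
    simp only [one_pow, one_mul, Finset.sum_const, smul_eq_mul, mul_one] at h1
    have h2 : ∑ p ∈ T, ((wt L p : ℝ))^2 ≤ (x : ℝ) + (L.card : ℝ)^2 := by
      have hA : ∑ p ∈ T, wt L p * wt L p ≤ x + L.card * (L.card - 1) := by
        calc ∑ p ∈ T, wt L p * wt L p = ∑ p ∈ T, (wt L p + wt L p * (wt L p - 1)) := by
              apply Finset.sum_congr rfl; intros p _; exact sq_nat_eq _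
          _ = x + ∑ p ∈ T, wt L p * (wt L p - 1) := by rw [Finset.sum_add_distrib, hx]
          _ ≤ x + L.card * (L.card - 1) := by
              have := sum_wt_mul_le L T
              omega
      calc ∑ p ∈ T, ((wt L p : ℝ))^2 = ((∑ p ∈ T, wt L p * wt L p : ℕ) : ℝ) := by
            push_cast; apply Finset.sum_congr rfl; intros; ring
        _ ≤ ((x + L.card * (L.card - 1) : ℕ) : ℝ) := by exact_mod_cast hA
        _ ≤ (x : ℝ) + (L.card : ℝ)^2 := by
            have h5 : ((L.card * (L.card - 1) : ℕ) : ℝ) ≤ (L.card : ℝ)^2 := by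
              have h3 : (L.card * (L.card - 1) : ℕ) ≤ L.card * L.card :=
                Nat.mul_le_mul_left _ (by omega)
              calc ((L.card * (L.card - 1) : ℕ) : ℝ) ≤ ((L.card * L.card : ℕ) : ℝ) := by
                    exact_mod_cast h3
                _ = (L.card : ℝ)^2 := by push_cast; ring
            calc ((x + L.card * (L.card - 1) : ℕ) : ℝ)
                = (x : ℝ) + ((L.card * (L.card - 1) : ℕ) : ℝ) := by push_cast; ring
              _ ≤ (x : ℝ) + (L.card : ℝ)^2 := by linarith
    calc ((x:ℝ))^2 = (∑ p ∈ T, (wt L p : ℝ))^2 := by rw [hx]; push_cast; ring_nf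
      _ ≤ (∑ p ∈ T, (1:ℝ)) * ∑ p ∈ T, ((wt L p : ℝ))^2 := by simpa using h1
      _ = (T.card : ℝ) * ∑ p ∈ T, ((wt L p : ℝ))^2 := by
          rw [Finset.sum_const, nsmul_eq_mul, mul_one]
      _ ≤ (T.card : ℝ) * ((x : ℝ) + (L.card : ℝ)^2) := by
          apply mul_le_mul_of_nonneg_left h2 (by positivity)
  exact quad_bound (by positivity) (by positivity) (by nlinarith [hCS])

set_option maxHeartbeats 4000000 in
/-- The core counting theorem (in generic coordinates). -/
theorem core (L P : Finset Pt) (r : ℕ) (hr : 2 ≤ r)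
    (HX : ∀ p ∈ cpts L, ∀ p' ∈ cpts L, p.1 = p'.1 → p = p')
    (hrich : ∀ l ∈ L, r ≤ (P.filter (fun p => onl l p)).card) :
    (L.card : ℝ) ≤ 1000000 * ((P.card : ℝ)^2 / (r : ℝ)^3 + (P.card : ℝ) / (r : ℝ)) := by
  classical
  set N := L.card with hN
  set n := P.card with hn
  have hrpos : (0:ℝ) < r := by exact_mod_cast (by omega : 0 < r)
  have hn0 : (0:ℝ) ≤ (n:ℝ) := by positivity
  have hN0 : (0:ℝ) ≤ (N:ℝ) := by positivity
  have hterm1 : (0:ℝ) ≤ (n:ℝ)^2/(r:ℝ)^3 := by positivity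
  have hterm2 : (0:ℝ) ≤ (n:ℝ)/(r:ℝ) := by positivity
  by_cases hcase1 : 2 * n < r * r
  · -- high r regime
    have hb := high_r_bound L P r (by omega) hrich hcase1
    have h2 : (N:ℝ) ≤ 1000000*((n:ℝ)/(r:ℝ)) := by
      rw [show (1000000:ℝ)*((n:ℝ)/(r:ℝ)) = (1000000*(n:ℝ))/(r:ℝ) by ring,
        le_div_iff₀ hrpos]
      nlinarith [hb, hn0]
    linarith
  · push_neg at hcase1
    have hrr2n : (r:ℝ)*(r:ℝ) ≤ 2*(n:ℝ) := by exact_mod_cast hcase1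
    by_cases hcase2 : r < 2000
    · -- pair bound regime
      have hp := pair_bound L P r hrich
      have h2 : N * (r * (r-1)) ≤ n * n :=
        le_trans hp (Nat.mul_le_mul_left _ (by omega))
      have h3 : (N:ℝ) * ((r:ℝ) * ((r:ℝ) - 1)) ≤ (n:ℝ) * n := by
        have h2' := (Nat.cast_le (α := ℝ)).2 h2
        push_cast [Nat.cast_sub (by omega : 1 ≤ r)] at h2'
        exact h2'
      have hr2000 : (r:ℝ) ≤ 2000 := by exact_mod_cast (by omega : r ≤ 2000)
      have hrge2 : (2:ℝ) ≤ r := by exact_mod_cast hr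
      have h4 : (N:ℝ) * (r:ℝ)^3 ≤ 4000 * (n:ℝ)^2 := by
        nlinarith [mul_le_mul_of_nonneg_right h3 hrpos.le,
          mul_nonneg (mul_nonneg hN0 (sq_nonneg (r:ℝ))) (by linarith : (0:ℝ) ≤ (r:ℝ) - 2),
          mul_nonneg (mul_nonneg hn0 hn0) (by linarith : (0:ℝ) ≤ 2000 - (r:ℝ))]
      have h5 : (N:ℝ) ≤ 1000000 * ((n:ℝ)^2/(r:ℝ)^3) := by
        rw [show (1000000:ℝ)*((n:ℝ)^2/(r:ℝ)^3) = (1000000*(n:ℝ)^2)/(r:ℝ)^3 by ring,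
          le_div_iff₀ (by positivity : (0:ℝ) < (r:ℝ)^3)]
        nlinarith [h4, sq_nonneg (n:ℝ)]
      linarith
    · push_neg at hcase2
      set t := r / 1000 with ht
      have ht2 : 2 ≤ t := by omega
      have htpos : 0 < t := by omega
      have htposR : (0:ℝ) < t := by exact_mod_cast htpos
      have htr : (t:ℝ) * 1000 ≤ r := by exact_mod_cast Nat.div_mul_le_self r 1000
      have hrt : (r:ℝ) ≤ 2000 * t := by exact_mod_cast (by omega : r ≤ 2000 * t)
      have htle : (t:ℝ) ≤ (r:ℝ)/1000 := by
        rw [le_div_iff₀ (by norm_num : (0:ℝ) < 1000)]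
        linarith
      by_cases hcase3 : N ≤ 100 * t
      · -- few lines
        have h1 : (N:ℝ) ≤ 100 * t := by exact_mod_cast hcase3
        have h2 : (N:ℝ) * r ≤ 1000000 * n := by
          nlinarith [mul_nonneg (by linarith : (0:ℝ) ≤ 100*(t:ℝ) - N) hrpos.le,
            mul_nonneg (by linarith : (0:ℝ) ≤ (r:ℝ) - (t:ℝ)*1000) hrpos.le,
            hrr2n, hn0]
        have h3 : (N:ℝ) ≤ 1000000 * ((n:ℝ)/(r:ℝ)) := by
          rw [show (1000000:ℝ)*((n:ℝ)/(r:ℝ)) = (1000000*(n:ℝ))/(r:ℝ) by ring,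
            le_div_iff₀ hrpos]
          linarith
        linarith
      · push_neg at hcase3
        have htN : t ≤ N := le_trans (by omega : t ≤ 100 * t) (le_of_lt hcase3)
        set q := N / t with hq
        have hq1 : 1 ≤ q := (Nat.one_le_div_iff htpos).2 htN
        have hq0R : (0:ℝ) < q := by exact_mod_cast (by omega : 0 < q)
        have hqt : q * t ≤ N := Nat.div_mul_le_self N t
        have htqN : (t:ℝ) * q ≤ (N:ℝ) := by
          have h0 : t * q ≤ N := by rw [Nat.mul_comm]; exact hqt
          exact_mod_cast h0
        have hNqt : N ≤ 2 * (q * t) := by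
          have h1 := Nat.div_add_mod N t
          rw [← hq] at h1
          have h2 : N % t < t := Nat.mod_lt _ htpos
          have h3 : t ≤ t * q := Nat.le_mul_of_pos_right t (by omega)
          have h4 : q * t = t * q := Nat.mul_comm q t
          omega
        have hNR : (N:ℝ) ≤ 2 * ((q:ℝ) * t) := by exact_mod_cast hNqt
        set B := N / q + 2 with hB
        obtain ⟨s, hsq, hWtot⟩ := exists_shift L q B hq1
        set Stot := ∑ j ∈ Finset.range B, ∑ p ∈ Xb L q s j, uwt L q p with hStot
        set Sh := P.filter (fun p => 4*q ≤ wt L p) with hSh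
        set Pg := P \ Sh with hPg
        -- heavy set is small
        have hShb : Sh.card ≤ t * t := by
          have h1 : ∑ p ∈ Sh, wt L p * (wt L p - 1) ≤ N * (N-1) := sum_wt_mul_le L Sh
          have h2 : ∀ p ∈ Sh, 12*(q*q) ≤ wt L p * (wt L p - 1) := by
            intro p hp
            have hw := (Finset.mem_filter.1 hp).2
            calc 12*(q*q) = 4*q*(3*q) := by ring
              _ ≤ 4*q*(4*q-1) := Nat.mul_le_mul_left _ (by omega)
              _ ≤ wt L p * (wt L p - 1) := Nat.mul_le_mul hw (by omega)
          have h3 : Sh.card * (12*(q*q)) ≤ N * N := by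
            calc Sh.card * (12*(q*q)) = ∑ _p ∈ Sh, 12*(q*q) := by
                  rw [Finset.sum_const, smul_eq_mul]
              _ ≤ ∑ p ∈ Sh, wt L p * (wt L p - 1) := Finset.sum_le_sum h2
              _ ≤ N * (N - 1) := h1
              _ ≤ N * N := Nat.mul_le_mul_left _ (by omega)
          have h4 : N * N ≤ 4 * (q*q) * (t*t) := by
            calc N * N ≤ (2*(q*t)) * (2*(q*t)) := Nat.mul_le_mul hNqt hNqt
              _ = 4 * (q*q) * (t*t) := by ring
          have h6 : Sh.card * 12 ≤ 4 * (t*t) := by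
            have hqq : 0 < q*q := by positivity
            apply Nat.le_of_mul_le_mul_right _ hqq
            calc Sh.card * 12 * (q*q) = Sh.card * (12*(q*q)) := by ring
              _ ≤ N * N := h3
              _ ≤ 4 * (q*q) * (t*t) := h4
              _ = 4 * (t*t) * (q*q) := by ring
          omega
        -- incidence lower bound
        have hI : N * r ≤ ∑ p ∈ P, wt L p := by
          rw [incidence_eq]
          calc N * r = ∑ _l ∈ L, r := by rw [Finset.sum_const, smul_eq_mul]
            _ ≤ _ := Finset.sum_le_sum hrich
        have hsplit : ∑ p ∈ Pg, wt L p + ∑ p ∈ Sh, wt L p = ∑ p ∈ P, wt L p :=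
          Finset.sum_sdiff (Finset.filter_subset _ _)
        -- heavy sum bound
        have hShsum : ((∑ p ∈ Sh, wt L p : ℕ) : ℝ) ≤ (t:ℝ)*t + (N:ℝ)*t := by
          have h1 := sum_wt_cs L Sh
          have h2 : (Sh.card : ℝ) ≤ (t:ℝ)*t := by exact_mod_cast hShb
          have h3 : Real.sqrt (Sh.card) ≤ (t:ℝ) := by
            rw [show ((t:ℝ)) = Real.sqrt ((t:ℝ)*t) by rw [Real.sqrt_mul_self htposR.le]]
            exact Real.sqrt_le_sqrt h2
          have h4 := mul_le_mul_of_nonneg_left h3 hN0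
          linarith
        -- cells
        set C := Pg.image (cellOf L q s) with hC
        have hfib : ∑ c ∈ C, ∑ p ∈ Pg.filter (fun p => cellOf L q s p = c), wt L p =
            ∑ p ∈ Pg, wt L p :=
          Finset.sum_fiberwise_of_maps_to (fun p hp => Finset.mem_image_of_mem _ hp) _
        have hcell1 : ∀ c ∈ C, (L.filter (fun l => ∃ p ∈ Pg.filter
            (fun p => cellOf L q s p = c), onl l p)).card ≤ 20*q := by
          intro c _
          apply cell_lines_bound L q s c.1 c.2 HX hq1 (le_of_lt hsq)
          intro p hp
          rw [Finset.mem_filter] at hp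
          have hco := hp.2
          have hband : bandOf q s (lam L p) = c.1 := by rw [← hco]; rfl
          have hkf : kfun L q s c.1 p.1 = c.2 := by rw [← hband, ← hco]; rfl
          have hwt : wt L p ≤ 4*q := by
            have h9 := hp.1
            rw [hPg, Finset.mem_sdiff, hSh] at h9
            have h2 := h9.2
            rw [Finset.mem_filter] at h2
            push_neg at h2
            have := h2 h9.1
            omega
          exact ⟨hband, hkf, hwt⟩
        -- number of cells
        have hCcard : (C.card : ℝ) ≤ 12 * ((t:ℝ)*(t:ℝ)) := by
          have hsub : C ⊆ (Finset.range B).biUnion (fun j => {j} ×ˢ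
              (Finset.range ((∑ p ∈ Xb L q s j, uwt L q p)/q + 1))) := by
            intro c hc
            rw [hC, Finset.mem_image] at hc
            obtain ⟨p, hp, hcp⟩ := hc
            have hjB : bandOf q s (lam L p) < B := by
              have h1 : bandOf q s (lam L p) ≤ lam L p / q + 1 := bandOf_le hq1
              have h2 : lam L p ≤ N := Finset.card_filter_le _ _
              have h3 : lam L p / q ≤ N / q := Nat.div_le_div_right h2
              rw [hB]
              omega
            apply Finset.mem_biUnion.2
            refine ⟨bandOf q s (lam L p), Finset.mem_range.2 hjB, ?_⟩
            rw [Finset.mem_product]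
            constructor
            · rw [← hcp]
              simp [cellOf]
            · rw [← hcp]
              simp only [cellOf]
              rw [Finset.mem_range]
              have h5 : kfun L q s (bandOf q s (lam L p)) p.1 ≤
                  (∑ p' ∈ Xb L q s (bandOf q s (lam L p)), uwt L q p')/q := by
                apply Nat.div_le_div_right
                apply Finset.sum_le_sum_of_subset
                exact Finset.filter_subset _ _
              omega
          have h1 : C.card ≤ Stot / q + B := by
            calc C.card ≤ ((Finset.range B).biUnion (fun j => {j} ×ˢ
                (Finset.range ((∑ p ∈ Xb L q s j, uwt L q p)/q + 1)))).card :=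
                  Finset.card_le_card hsub
              _ ≤ ∑ j ∈ Finset.range B, ({j} ×ˢ
                  (Finset.range ((∑ p ∈ Xb L q s j, uwt L q p)/q + 1))).card :=
                  Finset.card_biUnion_le
              _ = ∑ j ∈ Finset.range B, ((∑ p ∈ Xb L q s j, uwt L q p)/q + 1) := by
                  apply Finset.sum_congr rfl
                  intros j _
                  rw [Finset.card_product, Finset.card_singleton, Finset.card_range, one_mul]
              _ ≤ Stot / q + B := by
                  rw [Finset.sum_add_distrib, Finset.sum_const, Finset.card_range,
                    smul_eq_mul, mul_one, hStot]
                  have h9 : ∑ j ∈ Finset.range B, ((∑ p ∈ Xb L q s j, uwt L q p) / q) ≤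
                      (∑ j ∈ Finset.range B, ∑ p ∈ Xb L q s j, uwt L q p) / q :=
                    nat_sum_div_le (Finset.range B)
                      (fun j => ∑ p ∈ Xb L q s j, uwt L q p) q hq1
                  omega
          have hStotR : (Stot : ℝ) * q ≤ 2 * (N:ℝ) * N := by
            have h0 : q * Stot ≤ 2 * N * N := hWtot
            calc (Stot:ℝ) * q = ((q * Stot : ℕ) : ℝ) := by push_cast; ring
              _ ≤ ((2 * N * N : ℕ) :ℝ) := by exact_mod_cast h0
              _ = 2 * (N:ℝ) * N := by push_cast; ring
          have hdivA : ((Stot / q : ℕ) : ℝ) * q ≤ (Stot : ℝ) := by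
            exact_mod_cast Nat.div_mul_le_self Stot q
          have hdiv1 : ((Stot / q : ℕ) : ℝ) ≤ 8 * ((t:ℝ)*(t:ℝ)) := by
            have h5 : 2 * (N:ℝ) * N ≤ 8 * ((q:ℝ)*(q:ℝ)) * ((t:ℝ)*(t:ℝ)) := by
              nlinarith [hNR, hN0]
            have h7 : ((Stot / q : ℕ) : ℝ) * ((q:ℝ)*(q:ℝ)) ≤
                (8 * ((t:ℝ)*(t:ℝ))) * ((q:ℝ)*(q:ℝ)) := by
              calc ((Stot / q : ℕ) : ℝ) * ((q:ℝ)*(q:ℝ))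
                  = (((Stot / q : ℕ) : ℝ) * q) * q := by ring
                _ ≤ (Stot:ℝ) * q := mul_le_mul_of_nonneg_right hdivA hq0R.le
                _ ≤ 2 * (N:ℝ) * N := hStotR
                _ ≤ 8 * ((q:ℝ)*(q:ℝ)) * ((t:ℝ)*(t:ℝ)) := h5
                _ = (8 * ((t:ℝ)*(t:ℝ))) * ((q:ℝ)*(q:ℝ)) := by ring
            exact le_of_mul_le_mul_right h7 (by positivity)
          have hdiv2 : ((N / q : ℕ) : ℝ) ≤ 2 * t := by
            have hA : ((N / q : ℕ) : ℝ) * q ≤ (N:ℝ) := by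
              exact_mod_cast Nat.div_mul_le_self N q
            have h7 : ((N / q : ℕ) : ℝ) * q ≤ (2 * (t:ℝ)) * q := by
              calc ((N / q : ℕ) : ℝ) * q ≤ (N:ℝ) := hA
                _ ≤ 2 * ((q:ℝ) * t) := hNR
                _ = (2 * (t:ℝ)) * q := by ring
            exact le_of_mul_le_mul_right h7 hq0R
          have hCn : (C.card : ℝ) ≤ ((Stot / q : ℕ) : ℝ) + (((N/q : ℕ) : ℝ) + 2) := by
            have h12 : (C.card : ℕ) ≤ Stot / q + (N / q + 2) := by rw [← hB]; exact h1
            exact_mod_cast h12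
          have ht2R : (2:ℝ) ≤ t := by exact_mod_cast ht2
          nlinarith [hCn, hdiv1, hdiv2, ht2R]
        -- per cell incidence
        have hsq20 : ∀ c ∈ C, ((∑ p ∈ Pg.filter (fun p => cellOf L q s p = c), wt L p : ℕ) : ℝ) ≤
            20*(q:ℝ) + ((Pg.filter (fun p => cellOf L q s p = c)).card : ℝ) *
              Real.sqrt (20*(q:ℝ)) := by
          intro c hc
          have h1 := cell_incidence L (Pg.filter (fun p => cellOf L q s p = c))
          have h2 : ((L.filter (fun l => ∃ p ∈ Pg.filter
              (fun p => cellOf L q s p = c), onl l p)).card : ℝ) ≤ 20*(q:ℝ) := by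
            exact_mod_cast hcell1 c hc
          have h3 : Real.sqrt ((L.filter (fun l => ∃ p ∈ Pg.filter
              (fun p => cellOf L q s p = c), onl l p)).card) ≤ Real.sqrt (20*(q:ℝ)) :=
            Real.sqrt_le_sqrt h2
          have hnc0 : (0:ℝ) ≤ ((Pg.filter (fun p => cellOf L q s p = c)).card : ℝ) := by
            positivity
          have h4 := mul_le_mul_of_nonneg_left h3 hnc0
          linarith
        have hPgsum : ((∑ p ∈ Pg, wt L p : ℕ) : ℝ) ≤
            (C.card : ℝ) * (20*(q:ℝ)) + Real.sqrt (20*(q:ℝ)) * (n:ℝ) := by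
          have hcast : ((∑ p ∈ Pg, wt L p : ℕ) : ℝ) =
              ∑ c ∈ C, ((∑ p ∈ Pg.filter (fun p => cellOf L q s p = c), wt L p : ℕ) : ℝ) := by
            rw [← hfib]
            push_cast
            rfl
          have hnsum : ∑ c ∈ C, ((Pg.filter (fun p => cellOf L q s p = c)).card : ℝ) ≤ (n:ℝ) := by
            have hfc := Finset.card_eq_sum_card_fiberwise
              (f := cellOf L q s) (s := Pg) (t := C)
              (fun p hp => Finset.mem_image_of_mem _ hp)
            have hPgn : Pg.card ≤ n := by
              rw [hPg, hn]
              exact Finset.card_le_card (Finset.sdiff_subset)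
            calc ∑ c ∈ C, ((Pg.filter (fun p => cellOf L q s p = c)).card : ℝ)
                = ((∑ c ∈ C, (Pg.filter (fun p => cellOf L q s p = c)).card : ℕ) : ℝ) := by
                  push_cast; rfl
              _ = (Pg.card : ℝ) := by rw [← hfc]
              _ ≤ (n : ℝ) := by exact_mod_cast hPgn
          have hsq0 : (0:ℝ) ≤ Real.sqrt (20*(q:ℝ)) := Real.sqrt_nonneg _
          calc ((∑ p ∈ Pg, wt L p : ℕ) : ℝ)
              = ∑ c ∈ C, ((∑ p ∈ Pg.filter (fun p => cellOf L q s p = c), wt L p : ℕ) : ℝ) :=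
                hcast
            _ ≤ ∑ c ∈ C, (20*(q:ℝ) + ((Pg.filter (fun p => cellOf L q s p = c)).card : ℝ) *
                Real.sqrt (20*(q:ℝ))) := Finset.sum_le_sum hsq20
            _ = (C.card : ℝ) * (20*(q:ℝ)) +
                (∑ c ∈ C, ((Pg.filter (fun p => cellOf L q s p = c)).card : ℝ)) *
                  Real.sqrt (20*(q:ℝ)) := by
                rw [Finset.sum_add_distrib, Finset.sum_const, nsmul_eq_mul, ← Finset.sum_mul]
            _ ≤ (C.card : ℝ) * (20*(q:ℝ)) + Real.sqrt (20*(q:ℝ)) * (n:ℝ) := by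
                have := mul_le_mul_of_nonneg_right hnsum hsq0
                linarith
        -- grand chain
        have hIR : (N:ℝ)*r ≤ ((∑ p ∈ Pg, wt L p : ℕ):ℝ) + ((∑ p ∈ Sh, wt L p : ℕ):ℝ) := by
          have h0 : (N:ℝ) * (r:ℝ) ≤ ((∑ p ∈ P, wt L p : ℕ):ℝ) := by exact_mod_cast hI
          have h1 : ((∑ p ∈ Pg, wt L p : ℕ):ℝ) + ((∑ p ∈ Sh, wt L p : ℕ):ℝ) =
              ((∑ p ∈ P, wt L p : ℕ):ℝ) := by exact_mod_cast hsplit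
          linarith
        have hCq : (C.card : ℝ) * (20*(q:ℝ)) ≤ 240 * ((t:ℝ)*(N:ℝ)) := by
          have h0 := mul_le_mul_of_nonneg_right hCcard (by positivity : (0:ℝ) ≤ 20*(q:ℝ))
          have h1 : 12 * ((t:ℝ)*(t:ℝ)) * (20*(q:ℝ)) = 240 * ((t:ℝ) * ((t:ℝ)*(q:ℝ))) := by ring
          have h2 := mul_le_mul_of_nonneg_left htqN htposR.le
          nlinarith [h0, h2]
        have hmain : (N:ℝ)*r ≤ (t:ℝ)*t + (N:ℝ)*t + 240*((t:ℝ)*(N:ℝ)) +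
            Real.sqrt (20*(q:ℝ)) * n := by
          linarith [hIR, hShsum, hPgsum, hCq]
        have htsq : (t:ℝ)*t ≤ (n:ℝ) := by nlinarith [htle, hrr2n, htposR.le, hrpos.le]
        have hsqb : Real.sqrt (20*(q:ℝ)) ≤ Real.sqrt (20*(N:ℝ)/t) := by
          apply Real.sqrt_le_sqrt
          rw [show 20*(N:ℝ)/t = (20*(N:ℝ))/t by ring, le_div_iff₀ htposR]
          nlinarith [htqN]
        have hNt : (N:ℝ)*t ≤ (N:ℝ)*r/1000 := by nlinarith [htle, hN0]
        have h240 : 240*((t:ℝ)*(N:ℝ)) ≤ 240*((N:ℝ)*r)/1000 := by nlinarith [htle, hN0]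
        have hsqn : Real.sqrt (20*(q:ℝ)) * n ≤ (n:ℝ) * Real.sqrt (20*(N:ℝ)/t) := by
          rw [mul_comm]
          exact mul_le_mul_of_nonneg_left hsqb hn0
        have hmain2 : (N:ℝ)*r ≤ (n:ℝ) + 241*((N:ℝ)*r)/1000 +
            (n:ℝ)*Real.sqrt (20*(N:ℝ)/t) := by
          linarith [hmain, htsq, hNt, h240, hsqn]
        by_cases hlast : (N:ℝ) * r ≤ 4 * n
        · have h3 : (N:ℝ) ≤ 1000000 * ((n:ℝ)/(r:ℝ)) := by
            rw [show (1000000:ℝ)*((n:ℝ)/(r:ℝ)) = (1000000*(n:ℝ))/(r:ℝ) by ring,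
              le_div_iff₀ hrpos]
            linarith
          linarith
        · push_neg at hlast
          have hNpos : (0:ℝ) < N := by nlinarith [hn0, hrpos]
          have hhalf : (N:ℝ)*r/2 ≤ (n:ℝ) * Real.sqrt (20*(N:ℝ)/t) := by
            linarith [hmain2, hlast]
          have hc0 : (0:ℝ) ≤ 20*(N:ℝ)/t := by positivity
          have hsq2 : ((N:ℝ)*r/2)^2 ≤ (n:ℝ)^2 * (20*(N:ℝ)/t) := by
            have hl : (0:ℝ) ≤ (N:ℝ)*r/2 := by positivity
            calc ((N:ℝ)*r/2)^2 ≤ ((n:ℝ) * Real.sqrt (20*(N:ℝ)/t))^2 :=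
                  pow_le_pow_left₀ hl hhalf 2
              _ = (n:ℝ)^2 * (20*(N:ℝ)/t) := by rw [mul_pow, Real.sq_sqrt hc0]
          have h5 : (N:ℝ)*(r:ℝ)^2*t ≤ 80*(n:ℝ)^2 := by
            have hstep : ((N:ℝ)*(r:ℝ)^2*t) * N ≤ (80*(n:ℝ)^2) * N := by
              have h6 := mul_le_mul_of_nonneg_right hsq2 (by positivity : (0:ℝ) ≤ 4*(t:ℝ))
              have h7 : ((n:ℝ)^2*(20*(N:ℝ)/t))*(4*(t:ℝ)) = (80*(n:ℝ)^2) * N := by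
                field_simp
                ring
              have h8 : ((N:ℝ)*r/2)^2*(4*(t:ℝ)) = ((N:ℝ)*(r:ℝ)^2*t) * N := by ring
              linarith [h6, h7.le, h7.ge, h8.le, h8.ge]
            exact le_of_mul_le_mul_right hstep hNpos
          have h9 : (N:ℝ)*(r:ℝ)^3 ≤ 1000000*(n:ℝ)^2 := by
            nlinarith [h5, mul_nonneg (mul_nonneg hN0 (sq_nonneg (r:ℝ)))
              (by linarith : (0:ℝ) ≤ 2000*(t:ℝ) - r), htposR.le]
          have h10 : (N:ℝ) ≤ 1000000*((n:ℝ)^2/(r:ℝ)^3) := by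
            rw [show (1000000:ℝ)*((n:ℝ)^2/(r:ℝ)^3) = (1000000*(n:ℝ)^2)/(r:ℝ)^3 by ring,
              le_div_iff₀ (by positivity : (0:ℝ) < (r:ℝ)^3)]
            linarith
          linarith

/-! ### set-level lines -/

def IsLine' (ℓ : Set Pt) : Prop :=
  ∃ a b c : ℝ, (a, b) ≠ (0, 0) ∧ ℓ = {p : Pt | a * p.1 + b * p.2 = c}

/-- canonical form of a line through two given distinct points. -/
lemma line_canonical {ℓ : Set Pt} (hl : IsLine' ℓ) {p p' : Pt} (hp : p ∈ ℓ) (hp' : p' ∈ ℓ)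
    (hne : p ≠ p') :
    ℓ = {z : Pt | (p'.1 - p.1) * (z.2 - p.2) = (p'.2 - p.2) * (z.1 - p.1)} := by
  obtain ⟨a, b, c, hab, rfl⟩ := hl
  simp only [Set.mem_setOf_eq] at hp hp'
  have hd : (p'.1 - p.1, p'.2 - p.2) ≠ (0, 0) := by
    intro h
    apply hne
    have h1 : p'.1 - p.1 = 0 := congrArg Prod.fst h
    have h2 : p'.2 - p.2 = 0 := congrArg Prod.snd h
    exact Prod.ext (by linarith) (by linarith) |>.symm
  have hkey : a * (p'.1 - p.1) + b * (p'.2 - p.2) = 0 := by linarith [hp, hp']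
  ext z
  simp only [Set.mem_setOf_eq]
  constructor
  · intro hz
    have hz0 : a * (z.1 - p.1) + b * (z.2 - p.2) = 0 := by linarith [hz, hp]
    by_cases hb : b = 0
    · have ha : a ≠ 0 := by
        intro ha
        exact hab (Prod.ext ha hb)
      have hdx : p'.1 - p.1 = 0 := by
        have h0 : a * (p'.1 - p.1) = 0 := by
          rw [hb] at hkey
          linarith
        rcases mul_eq_zero.1 h0 with h | h
        · exact absurd h ha
        · exact h
      have hz1 : z.1 - p.1 = 0 := by
        have h0 : a * (z.1 - p.1) = 0 := by
          rw [hb] at hz0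
          linarith
        rcases mul_eq_zero.1 h0 with h | h
        · exact absurd h ha
        · exact h
      rw [hdx, hz1]
      ring
    · have hstep : b * ((p'.1 - p.1) * (z.2 - p.2)) = b * ((p'.2 - p.2) * (z.1 - p.1)) := by
        linear_combination (p'.1 - p.1) * hz0 - (z.1 - p.1) * hkey
      exact mul_left_cancel₀ hb hstep
  · intro hz
    by_cases hb : b = 0
    · have ha : a ≠ 0 := by
        intro ha
        exact hab (Prod.ext ha hb)
      have hdx : p'.1 - p.1 = 0 := by
        have h0 : a * (p'.1 - p.1) = 0 := by
          rw [hb] at hkey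
          linarith
        rcases mul_eq_zero.1 h0 with h | h
        · exact absurd h ha
        · exact h
      have hdy : p'.2 - p.2 ≠ 0 := by
        intro h
        apply hd
        rw [hdx, h]
      have hz1 : z.1 - p.1 = 0 := by
        have h0 : (p'.2 - p.2) * (z.1 - p.1) = 0 := by
          rw [hdx] at hz
          linarith [hz]
        rcases mul_eq_zero.1 h0 with h | h
        · exact absurd h hdy
        · exact h
      have hz1' : z.1 = p.1 := by linarith
      have heq : a * z.1 + b * z.2 = a * p.1 + b * p.2 := by rw [hb, hz1']; ring
      rw [heq, hp]
    · have hdx : p'.1 - p.1 ≠ 0 := by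
        intro h
        apply hd
        have hdy : p'.2 - p.2 = 0 := by
          have h0 : b * (p'.2 - p.2) = 0 := by
            rw [h] at hkey
            linarith
          rcases mul_eq_zero.1 h0 with h1 | h1
          · exact absurd h1 hb
          · exact h1
        rw [h, hdy]
      have hstep : (p'.1 - p.1) * (b * (z.2 - p.2)) =
          (p'.1 - p.1) * (-(a * (z.1 - p.1))) := by
        linear_combination b * hz + (z.1 - p.1) * hkey
      have hcanc : b * (z.2 - p.2) = -(a * (z.1 - p.1)) := mul_left_cancel₀ hdx hstep
      linear_combination hp + hcanc

/-- two distinct points determine a line. -/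
lemma line_unique' {ℓ ℓ' : Set Pt} (hl : IsLine' ℓ) (hl' : IsLine' ℓ') {p p' : Pt}
    (hp : p ∈ ℓ) (hp' : p' ∈ ℓ) (hq : p ∈ ℓ') (hq' : p' ∈ ℓ') (hne : p ≠ p') : ℓ = ℓ' := by
  rw [line_canonical hl hp hp' hne, line_canonical hl' hq hq' hne]

/-- a line which is the graph of `y = s x + c`. -/
def lineSet (l : Pt) : Set Pt := {z : Pt | z.2 = lv l z.1}

lemma lineSet_isLine (l : Pt) : IsLine' (lineSet l) := by
  refine ⟨-l.1, 1, l.2, ?_, ?_⟩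
  · intro h
    have := congrArg Prod.snd h
    norm_num at this
  · ext z
    simp only [lineSet, Set.mem_setOf_eq, lv]
    constructor <;> intro h <;> linarith

lemma lineSet_inj : Function.Injective lineSet := by
  intro l l' h
  have h0 : (0, lv l 0) ∈ lineSet l := rfl
  have h1 : (1, lv l 1) ∈ lineSet l := rfl
  rw [h] at h0 h1
  simp only [lineSet, Set.mem_setOf_eq] at h0 h1
  unfold lv at h0 h1
  simp at h0 h1
  have hs : l.1 = l'.1 := by linarith
  have hc : l.2 = l'.2 := by linarith
  exact Prod.ext hs hc

/-- a line containing two points with distinct abscissas is a graph. -/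
lemma line_is_graph {ℓ : Set Pt} (hl : IsLine' ℓ) {p p' : Pt} (hp : p ∈ ℓ) (hp' : p' ∈ ℓ)
    (hne : p.1 ≠ p'.1) : ∃ l : Pt, ℓ = lineSet l := by
  have hpp : p ≠ p' := fun h => hne (congrArg Prod.fst h)
  refine ⟨((p'.2 - p.2)/(p'.1 - p.1), p.2 - ((p'.2 - p.2)/(p'.1 - p.1)) * p.1), ?_⟩
  rw [line_canonical hl hp hp' hpp]
  ext z
  simp only [lineSet, Set.mem_setOf_eq, lv]
  have hdx : p'.1 - p.1 ≠ 0 := sub_ne_zero.2 (Ne.symm hne)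
  constructor
  · intro h
    field_simp
    nlinarith [h]
  · intro h
    field_simp at h
    nlinarith [h]

/-! ### rich lines, shears -/

def RichSet (P : Finset Pt) (r : ℕ) : Set (Set Pt) :=
  {ℓ : Set Pt | IsLine' ℓ ∧ r ≤ ((P : Set Pt) ∩ ℓ).ncard}

lemma richset_two_points {P : Finset Pt} {r : ℕ} (hr : 2 ≤ r) {ℓ : Set Pt}
    (hℓ : ℓ ∈ RichSet P r) : ∃ p p' : Pt, p ∈ P ∧ p' ∈ P ∧ p ∈ ℓ ∧ p' ∈ ℓ ∧ p ≠ p' := by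
  have hfin : ((P : Set Pt) ∩ ℓ).Finite := Set.Finite.inter_of_left (P.finite_toSet) _
  have h2 : 1 < ((P : Set Pt) ∩ ℓ).ncard := lt_of_lt_of_le (by omega) hℓ.2
  rw [Set.one_lt_ncard_iff hfin] at h2
  obtain ⟨p, p', hp, hp', hne⟩ := h2
  exact ⟨p, p', hp.1, hp'.1, hp.2, hp'.2, hne⟩

lemma richset_finite (P : Finset Pt) (r : ℕ) (hr : 2 ≤ r) : (RichSet P r).Finite := by
  classical
  have hch : ∀ ℓ : Set Pt, ∃ pp : Pt × Pt, ℓ ∈ RichSet P r →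
      (pp.1 ∈ P ∧ pp.2 ∈ P ∧ pp.1 ∈ ℓ ∧ pp.2 ∈ ℓ ∧ pp.1 ≠ pp.2) := by
    intro ℓ
    by_cases h : ℓ ∈ RichSet P r
    · obtain ⟨p, p', h1, h2, h3, h4, h5⟩ := richset_two_points hr h
      exact ⟨(p, p'), fun _ => ⟨h1, h2, h3, h4, h5⟩⟩
    · exact ⟨((0,0),(0,0)), fun hc => absurd hc h⟩
  choose F hF using hch
  apply Set.Finite.of_finite_image (f := F)
  · apply Set.Finite.subset ((P.finite_toSet).prod (P.finite_toSet))
    rintro pp ⟨ℓ, hℓ, rfl⟩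
    obtain ⟨h1, h2, _, _, _⟩ := hF ℓ hℓ
    exact ⟨h1, h2⟩
  · intro ℓ hℓ ℓ' hℓ' he
    obtain ⟨_, _, h3, h4, h5⟩ := hF ℓ hℓ
    obtain ⟨_, _, h3', h4', _⟩ := hF ℓ' hℓ'
    rw [he] at h3 h4 h5
    exact line_unique' hℓ.1 hℓ'.1 h3 h4 h3' h4' h5

def shear (c : ℝ) (z : Pt) : Pt := (z.1 + c * z.2, z.2)

lemma shear_comp (c : ℝ) (z : Pt) : shear (-c) (shear c z) = z := by
  unfold shear
  ext <;> simp <;> ring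

lemma shear_inj (c : ℝ) : Function.Injective (shear c) :=
  Function.LeftInverse.injective (g := shear (-c)) (shear_comp c)

lemma shear_comp' (c : ℝ) (z : Pt) : shear c (shear (-c) z) = z := by
  have := shear_comp (-c) z
  rw [neg_neg] at this
  exact this

lemma shear_line {c : ℝ} {ℓ : Set Pt} (h : IsLine' ℓ) : IsLine' (shear c '' ℓ) := by
  obtain ⟨a, b, e, hab, rfl⟩ := h
  refine ⟨a, b - a*c, e, ?_, ?_⟩
  · intro hc
    have h1 : a = 0 := congrArg Prod.fst hc
    have h2 : b - a*c = 0 := congrArg Prod.snd hc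
    refine hab (Prod.ext h1 ?_)
    show b = 0
    rw [h1] at h2
    linarith
  · ext w
    constructor
    · rintro ⟨z, hz, rfl⟩
      simp only [Set.mem_setOf_eq] at hz ⊢
      unfold shear
      simp only
      linear_combination hz
    · intro hw
      simp only [Set.mem_setOf_eq] at hw
      refine ⟨shear (-c) w, ?_, shear_comp' c w⟩
      simp only [Set.mem_setOf_eq]
      unfold shear
      simp only
      linear_combination hw

lemma mem_richset_shear {P : Finset Pt} {r : ℕ} (c : ℝ) {ℓ : Set Pt}
    (h : ℓ ∈ RichSet P r) : (shear c '' ℓ) ∈ RichSet (P.image (shear c)) r := by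
  refine ⟨shear_line h.1, ?_⟩
  have him : ((P.image (shear c) : Finset Pt) : Set Pt) ∩ (shear c '' ℓ) =
      shear c '' ((P : Set Pt) ∩ ℓ) := by
    rw [Finset.coe_image, Set.image_inter (shear_inj c)]
  rw [him, Set.ncard_image_of_injective _ (shear_inj c)]
  exact h.2

lemma richset_shear (P : Finset Pt) (r : ℕ) (c : ℝ) :
    RichSet (P.image (shear c)) r = (Set.image (shear c)) '' (RichSet P r) := by
  ext ℓ
  constructor
  · intro h
    refine ⟨shear (-c) '' ℓ, ?_, ?_⟩
    · have h2 := mem_richset_shear (-c) h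
      have h3 : (P.image (shear c)).image (shear (-c)) = P := by
        rw [Finset.image_image]
        have : shear (-c) ∘ shear c = id := funext (shear_comp c)
        rw [this, Finset.image_id]
      rw [h3] at h2
      exact h2
    · rw [← Set.image_comp]
      have : shear c ∘ shear (-c) = id := funext (shear_comp' c)
      rw [this, Set.image_id]
  · rintro ⟨ℓ₀, hℓ₀, rfl⟩
    exact mem_richset_shear c hℓ₀

lemma richset_shear_ncard (P : Finset Pt) (r : ℕ) (c : ℝ) :
    (RichSet (P.image (shear c)) r).ncard = (RichSet P r).ncard := by
  rw [richset_shear]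
  exact Set.ncard_image_of_injective _ (Set.image_injective.2 (shear_inj c))

def crossSet (P : Finset Pt) (r : ℕ) : Set Pt :=
  {z : Pt | ∃ ℓ ∈ RichSet P r, ∃ ℓ' ∈ RichSet P r, ℓ ≠ ℓ' ∧ z ∈ ℓ ∧ z ∈ ℓ'}

lemma crossSet_finite (P : Finset Pt) (r : ℕ) (hr : 2 ≤ r) : (crossSet P r).Finite := by
  classical
  have hsub : crossSet P r ⊆ ⋃ ℓ ∈ RichSet P r, ⋃ ℓ' ∈ RichSet P r,
      {z : Pt | ℓ ≠ ℓ' ∧ z ∈ ℓ ∧ z ∈ ℓ'} := by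
    rintro z ⟨ℓ, hℓ, ℓ', hℓ', hne, hz, hz'⟩
    simp only [Set.mem_iUnion]
    exact ⟨ℓ, hℓ, ℓ', hℓ', hne, hz, hz'⟩
  apply Set.Finite.subset ?_ hsub
  apply Set.Finite.biUnion (richset_finite P r hr)
  intro ℓ hℓ
  apply Set.Finite.biUnion (richset_finite P r hr)
  intro ℓ' hℓ'
  by_cases hne : ℓ = ℓ'
  · apply Set.Finite.subset (Set.finite_empty)
    rintro z ⟨h, _, _⟩
    exact h hne
  · apply Set.Subsingleton.finite
    rintro z ⟨_, hz1, hz2⟩ z' ⟨_, hz1', hz2'⟩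
    by_contra hzz
    exact hne (line_unique' hℓ.1 hℓ'.1 hz1 hz1' hz2 hz2' hzz)

lemma crossSet_shear (P : Finset Pt) (r : ℕ) (c : ℝ) :
    crossSet (P.image (shear c)) r = shear c '' (crossSet P r) := by
  ext z
  constructor
  · rintro ⟨ℓ, hℓ, ℓ', hℓ', hne, hz, hz'⟩
    rw [richset_shear] at hℓ hℓ'
    obtain ⟨ℓ₀, hℓ₀, rfl⟩ := hℓ
    obtain ⟨ℓ₀', hℓ₀', rfl⟩ := hℓ'
    obtain ⟨w, hw, rfl⟩ := hz
    refine ⟨w, ⟨ℓ₀, hℓ₀, ℓ₀', hℓ₀', ?_, hw, ?_⟩, rfl⟩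
    · intro hc
      exact hne (by rw [hc])
    · obtain ⟨w', hw', hww⟩ := hz'
      rw [← shear_inj c hww]
      exact hw'
  · rintro ⟨w, ⟨ℓ, hℓ, ℓ', hℓ', hne, hz, hz'⟩, rfl⟩
    refine ⟨shear c '' ℓ, mem_richset_shear c hℓ, shear c '' ℓ', mem_richset_shear c hℓ',
      ?_, ⟨w, hz, rfl⟩, ⟨w, hz', rfl⟩⟩
    intro hc
    exact hne (Set.image_injective.2 (shear_inj c) hc)

/-- choice of a good shear parameter. -/
lemma exists_good_shear (W : Set Pt) (hW : W.Finite) :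
    ∃ c : ℝ, ∀ w ∈ W, ∀ w' ∈ W, w ≠ w' → (shear c w).1 ≠ (shear c w').1 := by
  classical
  set bad : Set ℝ := ⋃ w ∈ W, ⋃ w' ∈ W, {(w.1 - w'.1)/(w'.2 - w.2)} with hbad
  have hbadfin : bad.Finite := by
    apply Set.Finite.biUnion hW
    intro w _
    apply Set.Finite.biUnion hW
    intro w' _
    exact Set.finite_singleton _
  obtain ⟨c, hc⟩ := hbadfin.infinite_compl.nonempty
  refine ⟨c, ?_⟩
  intro w hw w' hw' hne heq
  unfold shear at heq
  simp only at heq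
  by_cases hy : w.2 = w'.2
  · apply hne
    have : w.1 = w'.1 := by
      rw [hy] at heq
      linarith
    exact Prod.ext this hy
  · apply hc
    rw [hbad]
    simp only [Set.mem_iUnion]
    refine ⟨w, hw, w', hw', ?_⟩
    simp only [Set.mem_singleton_iff]
    field_simp [sub_ne_zero.2 (Ne.symm hy)]
    linarith

lemma cpts_spec {L : Finset Pt} {z : Pt} (hz : z ∈ cpts L) :
    ∃ l ∈ L, ∃ l' ∈ L, l ≠ l' ∧ onl l z ∧ onl l' z := by
  rw [cpts, Finset.mem_image] at hz
  obtain ⟨pr, hpr, rfl⟩ := hz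
  rw [Finset.mem_filter] at hpr
  obtain ⟨hmem, hne, hs⟩ := hpr
  rw [Finset.mem_product] at hmem
  refine ⟨pr.1, hmem.1, pr.2, hmem.2, hne, rfl, ?_⟩
  show lv pr.1 ((pr.2.2 - pr.1.2) / (pr.1.1 - pr.2.1)) =
    lv pr.2 ((pr.2.2 - pr.1.2) / (pr.1.1 - pr.2.1))
  unfold lv
  field_simp [sub_ne_zero.2 hs]
  ring

theorem main_st (P : Finset Pt) (r : ℕ) (hr : 2 ≤ r) :
    ((RichSet P r).ncard : ℝ) ≤
      1000000 * ((P.card : ℝ)^2/(r:ℝ)^3 + (P.card:ℝ)/(r:ℝ)) := by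
  classical
  obtain ⟨c, hc⟩ := exists_good_shear ((P : Set Pt) ∪ crossSet P r)
    ((P.finite_toSet).union (crossSet_finite P r hr))
  set P' := P.image (shear c) with hP'
  have hcard : P'.card = P.card := Finset.card_image_of_injective _ (shear_inj c)
  have hncard : (RichSet P' r).ncard = (RichSet P r).ncard := richset_shear_ncard P r c
  have hG1 : ∀ p ∈ P', ∀ p' ∈ P', p ≠ p' → p.1 ≠ p'.1 := by
    intro p hp p' hp' hne
    rw [hP', Finset.mem_image] at hp hp'
    obtain ⟨w, hw, rfl⟩ := hp
    obtain ⟨w', hw', rfl⟩ := hp'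
    exact hc w (Or.inl hw) w' (Or.inl hw') (fun h => hne (congrArg (shear c) h))
  have hG2 : ∀ z ∈ crossSet P' r, ∀ z' ∈ crossSet P' r, z ≠ z' → z.1 ≠ z'.1 := by
    intro z hz z' hz' hne
    rw [hP', crossSet_shear] at hz hz'
    obtain ⟨w, hw, rfl⟩ := hz
    obtain ⟨w', hw', rfl⟩ := hz'
    exact hc w (Or.inr hw) w' (Or.inr hw') (fun h => hne (congrArg (shear c) h))
  set LS := {l : Pt | lineSet l ∈ RichSet P' r} with hLS
  have hLSfin : LS.Finite := by
    have heq : LS = lineSet ⁻¹' (RichSet P' r) := rfl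
    rw [heq]
    exact Set.Finite.preimage (fun a _ b _ h => lineSet_inj h)
      (richset_finite P' r hr)
  set L := hLSfin.toFinset with hL
  have hmem : ∀ l, l ∈ L ↔ lineSet l ∈ RichSet P' r := by
    intro l
    rw [hL, Set.Finite.mem_toFinset]
    exact Iff.rfl
  have himg : lineSet '' LS = RichSet P' r := by
    apply Set.Subset.antisymm
    · rintro ℓ ⟨l, hl, rfl⟩
      exact hl
    · intro ℓ hℓ
      obtain ⟨p, p', hp, hp', hpl, hpl', hne⟩ := richset_two_points hr hℓ
      obtain ⟨l, rfl⟩ := line_is_graph hℓ.1 hpl hpl' (hG1 p hp p' hp' hne)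
      exact ⟨l, hℓ, rfl⟩
  have hLcard : L.card = (RichSet P' r).ncard := by
    rw [← himg, Set.ncard_image_of_injective _ lineSet_inj, hL]
    exact (Set.ncard_eq_toFinset_card LS hLSfin).symm
  have hrich : ∀ l ∈ L, r ≤ (P'.filter (fun p => onl l p)).card := by
    intro l hl
    have h1 := ((hmem l).1 hl).2
    have h2 : (P' : Set Pt) ∩ lineSet l = ((P'.filter (fun p => onl l p)) : Finset Pt) := by
      ext p
      simp only [Set.mem_inter_iff, Finset.mem_coe, Finset.coe_filter, Set.mem_setOf_eq]
      exact Iff.rfl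
    rw [h2, Set.ncard_coe_finset] at h1
    exact h1
  have hHX : ∀ z ∈ cpts L, ∀ z' ∈ cpts L, z.1 = z'.1 → z = z' := by
    intro z hz z' hz' hxx
    have hcr : ∀ w, w ∈ cpts L → w ∈ crossSet P' r := by
      intro w hw
      obtain ⟨l, hl, l', hl', hne, ho, ho'⟩ := cpts_spec hw
      exact ⟨lineSet l, (hmem l).1 hl, lineSet l', (hmem l').1 hl',
        fun h2 => hne (lineSet_inj h2), ho, ho'⟩
    by_contra hne'
    exact hG2 z (hcr z hz) z' (hcr z' hz') hne' hxx
  have hcore := core L P' r hr hHX hrich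
  rw [hcard] at hcore
  have hfin : ((RichSet P r).ncard : ℝ) = (L.card : ℝ) := by
    rw [hLcard, hncard]
  rw [hfin]
  exact hcore

lemma richset_eq (P : Finset Pt) (r : ℕ) :
    {ℓ : Set (ℝ × ℝ) | IsLine ℓ ∧ r ≤ ((P : Set (ℝ × ℝ)) ∩ ℓ).ncard} = RichSet P r := rfl

end ST

/-- Szemerédi–Trotter, rich-lines form. -/
theorem szemeredi_trotter_rich_lines :
    ∃ C : ℝ, 0 < C ∧
      ∀ (P : Finset (ℝ × ℝ)) (r : ℕ), 2 ≤ r →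
        ({ℓ : Set (ℝ × ℝ) | IsLine ℓ ∧ r ≤ ((P : Set (ℝ × ℝ)) ∩ ℓ).ncard}.ncard : ℝ) ≤
          C * ((P.card : ℝ) ^ 2 / (r : ℝ) ^ 3 + (P.card : ℝ) / (r : ℝ)) := by
  refine ⟨1000000, by norm_num, ?_⟩
  intro P r hr
  rw [ST.richset_eq P r]
  exact ST.main_st P r hr
end
end

section
/- (Loomis–Whitney inequality) Let n ≥ 2 and let O ⊆ ℝⁿ be an open set with Lebesgue measure m < ∞. For each i ∈ {1,…,n}, let m_i denote the (n−1)-dimensional Lebesgue measure of the image of O under the projection ℝⁿ → ℝ^{n−1} that deletes the i-th coordinate (this image is open, hence measurable). Then m^{n−1} ≤ ∏_{i=1}^n m_i. -/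
open MeasureTheory Finset Function
open scoped ENNReal

/-- Finner/Loomis–Whitney marginal induction: if each `g i` does not depend on the `i`-th
coordinate, then the marginal of `∏ i, (g i) ^ p` over `s` is bounded by the product of the
marginals of the `g i` over `s.erase i`, raised to the power `p`, where
`(card ι - 1) * p = 1`. -/
theorem lw_aux {ι : Type*} [Fintype ι] [DecidableEq ι] {A : ι → Type*}
    [∀ i, MeasurableSpace (A i)] (μ : ∀ i, Measure (A i)) [∀ i, SigmaFinite (μ i)]
    {p : ℝ} (hp0 : 0 ≤ p) (hp : ((Fintype.card ι : ℝ) - 1) * p = 1) (s : Finset ι) :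
    ∀ g : ι → ((∀ i, A i) → ℝ≥0∞), (∀ i, Measurable (g i)) →
      (∀ i x t, g i (Function.update x i t) = g i x) →
      ∀ x, (∫⋯∫⁻_s, (fun y => ∏ i, g i y ^ p) ∂μ) x
        ≤ ∏ i, ((∫⋯∫⁻_(s.erase i), g i ∂μ) x) ^ p := by
  induction s using Finset.induction_on with
  | empty => intro g hg hgi x; simp
  | @insert j s hj IH =>
    intro g hg hgi x
    have hone : Nonempty ι := ⟨j⟩
    have hmeas : Measurable fun y => ∏ i, g i y ^ p :=
      Finset.measurable_prod _ fun i _ => (hg i).pow_const p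
    set G : ι → ((∀ i, A i) → ℝ≥0∞) :=
      fun i => if i = j then g j else (∫⋯∫⁻_({j} : Finset ι), g i ∂μ) with hG
    have hGmeas : ∀ i, Measurable (G i) := by
      intro i
      by_cases h : i = j
      · simpa [hG, h] using hg j
      · simpa [hG, h] using (hg i).lmarginal μ
    have hGi : ∀ i x t, G i (Function.update x i t) = G i x := by
      intro i x t
      by_cases h : i = j
      · subst h; simpa [hG] using hgi i x t
      · simp only [hG, if_neg h]
        simp_rw [lmarginal_singleton, Function.update_comm h, hgi i]
    have inner : ∀ x, (∫⁻ t, (fun y => ∏ i, g i y ^ p) (Function.update x j t) ∂μ j)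
        ≤ ∏ i, G i x ^ p := by
      intro x
      have h1 : ∀ t, ∏ i, g i (Function.update x j t) ^ p
          = g j x ^ p * ∏ i ∈ univ.erase j, g i (Function.update x j t) ^ p := by
        intro t
        rw [← Finset.mul_prod_erase univ _ (mem_univ j), hgi j x t]
      calc ∫⁻ t, ∏ i, g i (Function.update x j t) ^ p ∂μ j
          = g j x ^ p * ∫⁻ t, ∏ i ∈ univ.erase j, g i (Function.update x j t) ^ p ∂μ j := by
            simp_rw [h1]
            exact lintegral_const_mul _ <| Finset.measurable_prod _ fun i _ =>
              ((hg i).comp (measurable_update x)).pow_const p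
        _ ≤ g j x ^ p * ∏ i ∈ univ.erase j, (∫⁻ t, g i (Function.update x j t) ∂μ j) ^ p := by
            gcongr
            refine ENNReal.lintegral_prod_norm_pow_le _
              (fun i _ => ((hg i).comp (measurable_update x)).aemeasurable) ?_ fun _ _ => hp0
            simp only [Finset.sum_const, Finset.card_erase_of_mem (mem_univ j), card_univ,
              nsmul_eq_mul]
            rw [Nat.cast_sub Fintype.card_pos, Nat.cast_one]
            exact hp
        _ = ∏ i, G i x ^ p := by
            rw [← Finset.mul_prod_erase univ (fun i => G i x ^ p) (mem_univ j)]
            congr 1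
            · simp [hG]
            · refine Finset.prod_congr rfl fun i hi => ?_
              have h : i ≠ j := (Finset.mem_erase.mp hi).1
              simp [hG, h, lmarginal_singleton]
    calc (∫⋯∫⁻_(insert j s), (fun y => ∏ i, g i y ^ p) ∂μ) x
        = (∫⋯∫⁻_s, (fun x => ∫⁻ t, (fun y => ∏ i, g i y ^ p) (Function.update x j t) ∂μ j) ∂μ) x := by
          rw [lmarginal_insert' _ hmeas hj]
      _ ≤ (∫⋯∫⁻_s, (fun y => ∏ i, G i y ^ p) ∂μ) x := lmarginal_mono inner x
      _ ≤ ∏ i, ((∫⋯∫⁻_(s.erase i), G i ∂μ) x) ^ p := IH G hGmeas hGi x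
      _ = ∏ i, ((∫⋯∫⁻_((insert j s).erase i), g i ∂μ) x) ^ p := by
          refine Finset.prod_congr rfl fun i _ => ?_
          by_cases h : i = j
          · subst h
            rw [Finset.erase_insert hj, Finset.erase_eq_of_notMem hj]
            simp [hG]
          · have hd : Disjoint (s.erase i) ({j} : Finset ι) :=
              Finset.disjoint_singleton_right.mpr fun hmem => hj (Finset.mem_of_mem_erase hmem)
            have he : (insert j s).erase i = (s.erase i) ∪ {j} := by
              rw [Finset.erase_insert_of_ne (Ne.symm h), Finset.insert_eq, Finset.union_comm]
            rw [he, lmarginal_union μ (g i) (hg i) hd]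
            simp [hG, h]

/-- Loomis–Whitney inequality: for an open set `O ⊆ ℝⁿ` (`n = m + 2 ≥ 2`) of finite
Lebesgue measure, the `(n-1)`-st power of its measure is bounded by the product of the
`(n-1)`-dimensional measures of its `n` coordinate projections. -/
theorem loomis_whitney (m : ℕ) (O : Set (Fin (m + 2) → ℝ))
    (hO : IsOpen O) (hfin : volume O < ⊤) :
    volume O ^ (m + 1) ≤
      ∏ i : Fin (m + 2), volume ((fun x : Fin (m + 2) → ℝ => x ∘ i.succAbove) '' O) := by
  classical
  set p : ℝ := (m + 1 : ℝ)⁻¹ with hpdef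
  have hp0 : 0 ≤ p := by positivity
  have hmp : ((m : ℝ) + 1) ≠ 0 := by positivity
  have hp : ((Fintype.card (Fin (m + 2)) : ℝ) - 1) * p = 1 := by
    rw [Fintype.card_fin, hpdef]
    push_cast
    rw [show ((m : ℝ) + 2 - 1) = ((m : ℝ) + 1) by ring, mul_inv_cancel₀ hmp]
  -- the projections and their images
  set P : ∀ i : Fin (m + 2), (Fin (m + 2) → ℝ) → (Fin (m + 1) → ℝ) :=
    fun i x => x ∘ i.succAbove with hP
  have hPmeas : ∀ i, Measurable (P i) :=
    fun i => measurable_pi_lambda _ fun j => measurable_pi_apply _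
  set S : Fin (m + 2) → Set (Fin (m + 1) → ℝ) := fun i => P i '' O with hS
  have hSopen : ∀ i, IsOpen (S i) := by
    intro i
    have key : S i = Prod.snd '' ((fun x : Fin (m + 2) → ℝ => (x i, P i x)) '' O) := by
      ext y
      constructor
      · rintro ⟨x, hx, rfl⟩; exact ⟨(x i, P i x), ⟨x, hx, rfl⟩, rfl⟩
      · rintro ⟨q, ⟨x, hx, rfl⟩, rfl⟩; exact ⟨x, hx, rfl⟩
    have himg : (fun x : Fin (m + 2) → ℝ => (x i, P i x)) '' O
        = (fun q : ℝ × (Fin (m + 1) → ℝ) => i.insertNth q.1 q.2) ⁻¹' O := by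
      ext q
      constructor
      · rintro ⟨x, hx, rfl⟩
        have hxx : i.insertNth (x i) (P i x) = x := Fin.insertNth_self_removeNth i x
        simpa [hxx] using hx
      · intro hq
        refine ⟨i.insertNth q.1 q.2, hq, ?_⟩
        have h1 : (Fin.insertNth (α := fun _ => ℝ) i q.1 q.2) i = q.1 :=
          Fin.insertNth_apply_same (α := fun _ => ℝ) i q.1 q.2
        have h2 : P i (i.insertNth q.1 q.2) = q.2 := by
          ext j; exact Fin.insertNth_apply_succAbove (α := fun _ => ℝ) i q.1 q.2 j
        rw [Prod.ext_iff]; exact ⟨h1, h2⟩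
    have hcont : Continuous (fun q : ℝ × (Fin (m + 1) → ℝ) => Fin.insertNth (α := fun _ => ℝ) i q.1 q.2) :=
      Continuous.finInsertNth (A := fun _ : Fin (m + 2) => ℝ) i continuous_fst continuous_snd
    rw [key, himg]
    exact isOpenMap_snd _ (hO.preimage hcont)
  -- the functions g i
  set g : Fin (m + 2) → ((Fin (m + 2) → ℝ) → ℝ≥0∞) :=
    fun i x => (S i).indicator (1 : (Fin (m + 1) → ℝ) → ℝ≥0∞) (P i x) with hg
  have hgmeas : ∀ i, Measurable (g i) := fun i =>
    ((measurable_const.indicator (hSopen i).measurableSet).comp (hPmeas i))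
  have hgi : ∀ (i) (x : Fin (m + 2) → ℝ) (t), g i (Function.update x i t) = g i x := by
    intro i x t
    have hPx : P i (Function.update x i t) = P i x := by
      ext j
      simp [hP, Function.update_of_ne (Fin.succAbove_ne i j)]
    simp only [hg, hPx]
  -- base point
  set x₀ : Fin (m + 2) → ℝ := fun _ => 0 with hx₀
  -- Step 1 : volume O ≤ ∏ (volume S i) ^ p
  have step1 : volume O ≤ ∏ i : Fin (m + 2), (volume (S i)) ^ p := by
    have h1 : volume O = ∫⁻ x, O.indicator 1 x :=
      (lintegral_indicator_one hO.measurableSet).symm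
    have h2 : ∀ x, O.indicator (1 : (Fin (m + 2) → ℝ) → ℝ≥0∞) x ≤ ∏ i, g i x ^ p := by
      intro x
      by_cases hx : x ∈ O
      · have hone : ∀ i, g i x = 1 := by
          intro i
          have hmem : P i x ∈ S i := ⟨x, hx, rfl⟩
          simp [hg, Set.indicator_of_mem hmem]
        simp [Set.indicator_of_mem hx, hone]
      · simp [Set.indicator_of_notMem hx]
    have h3 : (∫⁻ x, ∏ i, g i x ^ p)
        = (∫⋯∫⁻_(Finset.univ), (fun y => ∏ i, g i y ^ p) ∂(fun _ : Fin (m + 2) => (volume : Measure ℝ))) x₀ := by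
      rw [lmarginal_univ, volume_pi]
    have h4 := lw_aux (fun _ : Fin (m + 2) => (volume : Measure ℝ)) hp0 hp Finset.univ g hgmeas hgi x₀
    have h5 : ∀ i : Fin (m + 2),
        (∫⋯∫⁻_(Finset.univ.erase i), g i ∂(fun _ : Fin (m + 2) => (volume : Measure ℝ))) x₀ ≤ volume (S i) := by
      intro i
      have hsa : ∀ j : Fin (m + 1), i.succAbove j ∈ Finset.univ.erase i := by
        intro j; exact Finset.mem_erase.mpr ⟨Fin.succAbove_ne i j, Finset.mem_univ _⟩
      set e : Fin (m + 1) ≃ {k // k ∈ Finset.univ.erase i} :=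
        Equiv.ofBijective (fun j => ⟨i.succAbove j, hsa j⟩)
          ⟨fun a b hab => Fin.succAbove_right_injective (p := i) (by simpa using hab),
           by
            rintro ⟨k, hk⟩
            obtain ⟨j, rfl⟩ := Fin.exists_succAbove_eq (Finset.mem_erase.mp hk).1
            exact ⟨j, rfl⟩⟩ with he
      have hmpres := measurePreserving_piCongrLeft
        (fun _ : {k // k ∈ Finset.univ.erase i} => (volume : Measure ℝ)) e
      rw [lmarginal]
      rw [← hmpres.map_eq, lintegral_map_equiv]
      have hval : ∀ z : Fin (m + 1) → ℝ,
          g i (Function.updateFinset x₀ (Finset.univ.erase i)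
              ((MeasurableEquiv.piCongrLeft (fun _ => ℝ) e) z))
            = (S i).indicator 1 z := by
        intro z
        have hPz : P i (Function.updateFinset x₀ (Finset.univ.erase i)
            ((MeasurableEquiv.piCongrLeft (fun _ => ℝ) e) z)) = z := by
          ext j
          have h1 : (Function.updateFinset x₀ (Finset.univ.erase i)
              ((MeasurableEquiv.piCongrLeft (fun _ => ℝ) e) z)) (i.succAbove j)
              = (MeasurableEquiv.piCongrLeft (fun _ => ℝ) e) z ⟨i.succAbove j, hsa j⟩ := by
            simp [Function.updateFinset, hsa j]
          rw [hP]
          simp only [Function.comp_apply, h1]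
          have h2 : (⟨i.succAbove j, hsa j⟩ : {k // k ∈ Finset.univ.erase i}) = e j := rfl
          rw [h2, MeasurableEquiv.coe_piCongrLeft, Equiv.piCongrLeft_apply_apply]
        simp only [hg, hPz]
      simp_rw [hval]
      rw [show (Measure.pi fun _ : Fin (m + 1) => (volume : Measure ℝ)) = volume from
        (volume_pi).symm]
      rw [lintegral_indicator_one (hSopen i).measurableSet]
    calc volume O = ∫⁻ x, O.indicator 1 x := h1
      _ ≤ ∫⁻ x, ∏ i, g i x ^ p := lintegral_mono h2
      _ ≤ ∏ i, ((∫⋯∫⁻_(Finset.univ.erase i), g i ∂(fun _ : Fin (m + 2) => (volume : Measure ℝ))) x₀) ^ p := by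
          rw [h3]; exact h4
      _ ≤ ∏ i, (volume (S i)) ^ p :=
          Finset.prod_le_prod' fun i _ => ENNReal.rpow_le_rpow (h5 i) hp0
  -- Step 2 : raise to the (m+1)-st power
  calc volume O ^ (m + 1) ≤ (∏ i : Fin (m + 2), (volume (S i)) ^ p) ^ (m + 1) :=
        pow_le_pow_left' step1 (m + 1)
    _ = ∏ i : Fin (m + 2), ((volume (S i)) ^ p) ^ (m + 1) := by rw [Finset.prod_pow]
    _ = ∏ i : Fin (m + 2), volume (S i) := by
        refine Finset.prod_congr rfl fun i _ => ?_
        rw [← ENNReal.rpow_natCast ((volume (S i)) ^ p) (m + 1), ← ENNReal.rpow_mul]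
        push_cast
        rw [hpdef, inv_mul_cancel₀ hmp, ENNReal.rpow_one]
end

section
/- (Lower richness of the constructed lines) For every positive integer k that is not a perfect square there exists c* ∈ (0,1) such that for every constant c ∈ (c*,1) there exist a constant c₂ > 0 and N₀ such that for all N ≥ N₀ and all real M with 1 ≤ M ≤ N, every line ℓ ∈ L contains at least c₂·N/M points of P = A_N × A_N. -/
/-- `A_N = { x₁ + x₂·√k : x₁, x₂ ∈ ℤ, |x₁| ≤ √N, |x₂| ≤ √N }`. -/
def aSet (k N : ℕ) : Set ℝ :=
  {x : ℝ | ∃ x₁ x₂ : ℤ, |(x₁ : ℝ)| ≤ Real.sqrt N ∧ |(x₂ : ℝ)| ≤ Real.sqrt N ∧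
    x = (x₁ : ℝ) + (x₂ : ℝ) * Real.sqrt k}

/-- The slope set `S` with parameters `M` and `c`. -/
def slopeSet (k : ℕ) (M c : ℝ) : Set ℝ :=
  {s : ℝ | ∃ p₁ p₂ q₁ q₂ : ℤ,
    (c * Real.sqrt M ≤ |(p₁ : ℝ)| ∧ |(p₁ : ℝ)| ≤ Real.sqrt M) ∧
    (c * Real.sqrt M ≤ |(p₂ : ℝ)| ∧ |(p₂ : ℝ)| ≤ Real.sqrt M) ∧
    (c * Real.sqrt M ≤ |(q₁ : ℝ)| ∧ |(q₁ : ℝ)| ≤ Real.sqrt M) ∧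
    (c * Real.sqrt M ≤ |(q₂ : ℝ)| ∧ |(q₂ : ℝ)| ≤ Real.sqrt M) ∧
    (¬ ∃ d : ℕ, d.Prime ∧ 5 < d ∧
      (d : ℤ) ∣ (p₁ ^ 2 - (k : ℤ) * p₂ ^ 2) ∧ (d : ℤ) ∣ (q₁ ^ 2 - (k : ℤ) * q₂ ^ 2)) ∧
    (¬ ∃ d : ℕ, d.Prime ∧ 5 < d ∧ (d : ℤ) ∣ p₁ ∧ (d : ℤ) ∣ p₂) ∧
    s = ((p₁ : ℝ) + (p₂ : ℝ) * Real.sqrt k) / ((q₁ : ℝ) + (q₂ : ℝ) * Real.sqrt k)}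

/-- The constructed line set `L = { y = s·(x−a)+b : s ∈ S, (a,b) ∈ A_{N/4} × A_{N/4} }`. -/
def lineSet (k N : ℕ) (M c : ℝ) : Set (Set (ℝ × ℝ)) :=
  {ℓ : Set (ℝ × ℝ) | ∃ s ∈ slopeSet k M c, ∃ a ∈ aSet k (N / 4), ∃ b ∈ aSet k (N / 4),
    ℓ = {p : ℝ × ℝ | p.2 = s * (p.1 - a) + b}}

lemma sqrt_lin_indep (k : ℕ) (hirr : Irrational (Real.sqrt k)) :
    ∀ a b c d : ℤ, (a:ℝ) + b * Real.sqrt k = c + d * Real.sqrt k → a = c ∧ b = d := by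
  intro a b c d h
  by_cases hbd : b = d
  · subst hbd
    refine ⟨?_, rfl⟩
    have : (a:ℝ) = c := by linarith
    exact_mod_cast this
  · exfalso
    have hne : ((d - b : ℤ) : ℝ) ≠ 0 := by
      exact_mod_cast sub_ne_zero.mpr (Ne.symm hbd)
    have heq : Real.sqrt k = ((a - c : ℤ) : ℝ) / ((d - b : ℤ) : ℝ) := by
      rw [eq_div_iff hne]
      push_cast
      linear_combination -h
    apply hirr
    exact ⟨((a - c : ℤ) : ℚ) / ((d - b : ℤ) : ℚ), by rw [heq]; push_cast; ring⟩

lemma aSet_finite (k N : ℕ) : (aSet k N).Finite := by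
  have hsub : aSet k N ⊆ (fun p : ℤ × ℤ => (p.1:ℝ) + (p.2:ℝ) * Real.sqrt k) ''
      (Set.Icc (-(⌊Real.sqrt N⌋)) ⌊Real.sqrt N⌋ ×ˢ Set.Icc (-(⌊Real.sqrt N⌋)) ⌊Real.sqrt N⌋) := by
    rintro x ⟨x₁, x₂, h1, h2, rfl⟩
    refine ⟨(x₁, x₂), ⟨?_, ?_⟩, rfl⟩
    · obtain ⟨l, u⟩ := abs_le.mp h1
      constructor
      · rw [neg_le]; exact Int.le_floor.mpr (by push_cast; linarith)
      · exact Int.le_floor.mpr (by push_cast; linarith)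
    · obtain ⟨l, u⟩ := abs_le.mp h2
      constructor
      · rw [neg_le]; exact Int.le_floor.mpr (by push_cast; linarith)
      · exact Int.le_floor.mpr (by push_cast; linarith)
  exact (((Set.finite_Icc _ _).prod (Set.finite_Icc _ _)).image _).subset hsub
set_option maxHeartbeats 1000000 in
/-- Lower richness: every constructed line contains at least `c₂·N/M` points of `P`. -/
theorem lines_lower_richness (k : ℕ) (hk : 0 < k) (hks : ¬ IsSquare k) :
    ∃ cstar : ℝ, 0 < cstar ∧ cstar < 1 ∧
      ∀ c : ℝ, cstar < c → c < 1 →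
        ∃ c₂ : ℝ, 0 < c₂ ∧ ∃ N₀ : ℕ,
          ∀ N : ℕ, N₀ ≤ N → ∀ M : ℝ, 1 ≤ M → M ≤ (N : ℝ) →
            ∀ ℓ ∈ lineSet k N M c,
              c₂ * (N : ℝ) / M ≤
                (((aSet k N ×ˢ aSet k N : Set (ℝ × ℝ)) ∩ ℓ).ncard : ℝ) := by
  have hirr : Irrational (Real.sqrt k) := irrational_sqrt_natCast_iff.mpr hks
  have huniq := sqrt_lin_indep k hirr
  refine ⟨1/2, by norm_num, by norm_num, fun c hc hc1 => ?_⟩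
  refine ⟨1/(16*(k:ℝ)^2), by positivity, 0, fun N _ M hM1 hMN ℓ hℓ => ?_⟩
  obtain ⟨s, hsS, a, haA, b, hbA, rfl⟩ := hℓ
  obtain ⟨p₁, p₂, q₁, q₂, hp₁, hp₂, hq₁, hq₂, -, -, rfl⟩ := hsS
  obtain ⟨a₁, a₂, ha₁, ha₂, rfl⟩ := haA
  obtain ⟨b₁, b₂, hb₁, hb₂, rfl⟩ := hbA
  set K := Real.sqrt k with hKdef
  have hK0 : 0 ≤ K := Real.sqrt_nonneg _
  have hK2 : K^2 = (k:ℝ) := Real.sq_sqrt (by positivity)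
  have hsM : (1:ℝ) ≤ Real.sqrt M := by
    rw [show (1:ℝ) = Real.sqrt 1 by simp]
    exact Real.sqrt_le_sqrt hM1
  have hM0 : (0:ℝ) ≤ M := by linarith
  have hc0 : (0:ℝ) < c := by linarith
  have hcM : (0:ℝ) < c * Real.sqrt M := by nlinarith
  have hk1 : (1:ℝ) ≤ (k:ℝ) := by exact_mod_cast hk
  -- q₂ ≠ 0, q₁ ≠ 0
  have hq₂0 : q₂ ≠ 0 := by
    intro h
    have := hq₂.1
    rw [h] at this
    simp at this
    linarith
  have hq₁0 : q₁ ≠ 0 := by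
    intro h
    have := hq₁.1
    rw [h] at this
    simp at this
    linarith
  have hQne : (q₁:ℝ) + (q₂:ℝ) * K ≠ 0 := by
    intro h
    have h' : (q₁:ℝ) + (q₂:ℝ) * K = ((0:ℤ):ℝ) + ((0:ℤ):ℝ) * K := by push_cast; linarith
    exact hq₂0 ((huniq q₁ q₂ 0 0 h').2)
  -- nonzero determinant
  have hdet : q₁^2 - (k:ℤ) * q₂^2 ≠ 0 := by
    intro h
    have hZ : (k:ℤ) * q₂^2 = q₁^2 := by linarith
    have hR : (k:ℝ) * (q₂:ℝ)^2 = (q₁:ℝ)^2 := by exact_mod_cast hZ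
    have hq2R : ((q₂:ℝ))^2 ≠ 0 := by
      have : (q₂:ℝ) ≠ 0 := by exact_mod_cast hq₂0
      positivity
    have hkr : (k:ℝ) = (q₁:ℝ)^2 / (q₂:ℝ)^2 := by
      field_simp
      linarith
    have hKval : K = |(q₁:ℝ)| / |(q₂:ℝ)| := by
      rw [hKdef, hkr, Real.sqrt_div (sq_nonneg _), Real.sqrt_sq_eq_abs, Real.sqrt_sq_eq_abs]
    exact hirr ⟨((|q₁| : ℤ) : ℚ) / ((|q₂| : ℤ) : ℚ), by rw [hKval]; push_cast; ring⟩
  -- the parameter T and the box of shifts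
  set T : ℕ := ⌊Real.sqrt N / (4 * k * Real.sqrt M)⌋₊ with hTdef
  have hT_le : (T:ℝ) ≤ Real.sqrt N / (4 * k * Real.sqrt M) := Nat.floor_le (by positivity)
  have hT_lt : Real.sqrt N / (4 * k * Real.sqrt M) < T + 1 := Nat.lt_floor_add_one _
  have h4pos : (0:ℝ) < 4 * k * Real.sqrt M := by positivity
  have hTM : 2 * (k:ℝ) * T * Real.sqrt M ≤ Real.sqrt N / 2 := by
    have h' : (T:ℝ) * (4 * k * Real.sqrt M) ≤ Real.sqrt N := (le_div_iff₀ h4pos).mp hT_le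
    nlinarith
  have hTM0 : (0:ℝ) ≤ (T:ℝ) * Real.sqrt M := by positivity
  have hstep : (T:ℝ)*Real.sqrt M ≤ (k:ℝ) * ((T:ℝ)*Real.sqrt M) := le_mul_of_one_le_left hTM0 hk1
  have hcomb : (T:ℝ)*Real.sqrt M + (T:ℝ)*Real.sqrt M*(k:ℝ) ≤ Real.sqrt N / 2 := by linarith [hTM, hstep]
  have hcomb2 : 2*((T:ℝ)*Real.sqrt M) ≤ Real.sqrt N / 2 := by linarith [hTM, hstep]
  have hN4 : Real.sqrt ((N/4 : ℕ)) ≤ Real.sqrt N / 2 := by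
    calc Real.sqrt ((N/4 : ℕ)) ≤ Real.sqrt ((N:ℝ)/4) := Real.sqrt_le_sqrt Nat.cast_div_le
    _ = Real.sqrt N / 2 := by
        rw [show (N:ℝ)/4 = (N:ℝ) * (1/2)^2 by ring, Real.sqrt_mul (Nat.cast_nonneg N),
          Real.sqrt_sq (by norm_num : (0:ℝ) ≤ 1/2)]
        ring
  set box : Finset (ℤ × ℤ) := Finset.Icc (-(T:ℤ)) (T:ℤ) ×ˢ Finset.Icc (-(T:ℤ)) (T:ℤ) with hboxdef
  have htbound : ∀ t : ℤ × ℤ, t ∈ box → |(t.1:ℝ)| ≤ (T:ℝ) ∧ |(t.2:ℝ)| ≤ (T:ℝ) := by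
    intro t ht
    rw [hboxdef, Finset.mem_product, Finset.mem_Icc, Finset.mem_Icc] at ht
    exact ⟨abs_le.mpr ⟨by exact_mod_cast ht.1.1, by exact_mod_cast ht.1.2⟩,
      abs_le.mpr ⟨by exact_mod_cast ht.2.1, by exact_mod_cast ht.2.2⟩⟩
  -- the coordinate bound
  have hbound : ∀ a₀ r₁ r₂ : ℤ, ∀ t : ℤ × ℤ, t ∈ box →
      |(a₀:ℝ)| ≤ Real.sqrt ((N/4:ℕ)) → |(r₁:ℝ)| ≤ Real.sqrt M → |(r₂:ℝ)| ≤ Real.sqrt M →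
      (|((a₀ + t.1*r₁ + t.2*r₂*(k:ℤ) : ℤ):ℝ)| ≤ Real.sqrt N ∧
       |((a₀ + t.1*r₂ + t.2*r₁ : ℤ):ℝ)| ≤ Real.sqrt N) := by
    intro a₀ r₁ r₂ t ht h0 hr₁ hr₂
    obtain ⟨ht1, ht2⟩ := htbound t ht
    have u1 : |(t.1:ℝ)| * |(r₁:ℝ)| ≤ (T:ℝ) * Real.sqrt M :=
      mul_le_mul ht1 hr₁ (abs_nonneg _) (Nat.cast_nonneg T)
    have u2 : |(t.2:ℝ)| * |(r₂:ℝ)| ≤ (T:ℝ) * Real.sqrt M :=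
      mul_le_mul ht2 hr₂ (abs_nonneg _) (Nat.cast_nonneg T)
    have u3 : |(t.1:ℝ)| * |(r₂:ℝ)| ≤ (T:ℝ) * Real.sqrt M :=
      mul_le_mul ht1 hr₂ (abs_nonneg _) (Nat.cast_nonneg T)
    have u4 : |(t.2:ℝ)| * |(r₁:ℝ)| ≤ (T:ℝ) * Real.sqrt M :=
      mul_le_mul ht2 hr₁ (abs_nonneg _) (Nat.cast_nonneg T)
    have u2k : |(t.2:ℝ)| * |(r₂:ℝ)| * (k:ℝ) ≤ (T:ℝ) * Real.sqrt M * (k:ℝ) :=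
      mul_le_mul_of_nonneg_right u2 (Nat.cast_nonneg k)
    constructor
    · have A1 : |((a₀:ℝ) + (t.1:ℝ)*(r₁:ℝ) + (t.2:ℝ)*(r₂:ℝ)*(k:ℝ))| ≤
          |(a₀:ℝ)| + |(t.1:ℝ)| * |(r₁:ℝ)| + |(t.2:ℝ)| * |(r₂:ℝ)| * (k:ℝ) := by
        calc |((a₀:ℝ) + (t.1:ℝ)*(r₁:ℝ) + (t.2:ℝ)*(r₂:ℝ)*(k:ℝ))|
            ≤ |((a₀:ℝ) + (t.1:ℝ)*(r₁:ℝ))| + |(t.2:ℝ)*(r₂:ℝ)*(k:ℝ)| := abs_add_le _ _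
          _ ≤ |(a₀:ℝ)| + |(t.1:ℝ)*(r₁:ℝ)| + |(t.2:ℝ)*(r₂:ℝ)*(k:ℝ)| := by
              linarith [abs_add_le (a₀:ℝ) ((t.1:ℝ)*(r₁:ℝ))]
          _ = |(a₀:ℝ)| + |(t.1:ℝ)| * |(r₁:ℝ)| + |(t.2:ℝ)| * |(r₂:ℝ)| * (k:ℝ) := by
              rw [abs_mul, abs_mul, abs_mul, Nat.abs_cast]
      push_cast
      linarith [A1, u1, u2k, le_trans h0 hN4, hcomb]
    · have A1 : |((a₀:ℝ) + (t.1:ℝ)*(r₂:ℝ) + (t.2:ℝ)*(r₁:ℝ))| ≤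
          |(a₀:ℝ)| + |(t.1:ℝ)| * |(r₂:ℝ)| + |(t.2:ℝ)| * |(r₁:ℝ)| := by
        calc |((a₀:ℝ) + (t.1:ℝ)*(r₂:ℝ) + (t.2:ℝ)*(r₁:ℝ))|
            ≤ |((a₀:ℝ) + (t.1:ℝ)*(r₂:ℝ))| + |(t.2:ℝ)*(r₁:ℝ)| := abs_add_le _ _
          _ ≤ |(a₀:ℝ)| + |(t.1:ℝ)*(r₂:ℝ)| + |(t.2:ℝ)*(r₁:ℝ)| := by
              linarith [abs_add_le (a₀:ℝ) ((t.1:ℝ)*(r₂:ℝ))]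
          _ = |(a₀:ℝ)| + |(t.1:ℝ)| * |(r₂:ℝ)| + |(t.2:ℝ)| * |(r₁:ℝ)| := by
              rw [abs_mul, abs_mul]
      push_cast
      linarith [A1, u3, u4, le_trans h0 hN4, hcomb2]
  -- the family of points
  set F : ℤ × ℤ → ℝ × ℝ := fun t =>
    (((a₁ + t.1*q₁ + t.2*q₂*(k:ℤ) : ℤ):ℝ) + ((a₂ + t.1*q₂ + t.2*q₁ : ℤ):ℝ) * K,
     ((b₁ + t.1*p₁ + t.2*p₂*(k:ℤ) : ℤ):ℝ) + ((b₂ + t.1*p₂ + t.2*p₁ : ℤ):ℝ) * K) with hFdef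
  have hFinj : Function.Injective F := by
    intro t t' h
    have h1 : ((a₁ + t.1*q₁ + t.2*q₂*(k:ℤ) : ℤ):ℝ) + ((a₂ + t.1*q₂ + t.2*q₁ : ℤ):ℝ) * K =
        ((a₁ + t'.1*q₁ + t'.2*q₂*(k:ℤ) : ℤ):ℝ) + ((a₂ + t'.1*q₂ + t'.2*q₁ : ℤ):ℝ) * K :=
      congrArg Prod.fst h
    obtain ⟨e1, e2⟩ := huniq _ _ _ _ h1
    have key : (t.2 - t'.2) * (q₁^2 - (k:ℤ)*q₂^2) = 0 := by
      linear_combination (q₁:ℤ) * e2 - (q₂:ℤ) * e1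
    have h22 : t.2 = t'.2 := by
      rcases mul_eq_zero.mp key with h' | h'
      · linarith
      · exact absurd h' hdet
    have h11 : t.1 = t'.1 := by
      have hz : (t.1 - t'.1) * q₂ = 0 := by linear_combination e2 - (q₁:ℤ) * h22
      rcases mul_eq_zero.mp hz with h' | h'
      · linarith
      · exact absurd h' hq₂0
    exact Prod.ext h11 h22
  -- membership
  have hmem : ∀ t ∈ box, F t ∈ (aSet k N ×ˢ aSet k N : Set (ℝ × ℝ)) ∩
      {p : ℝ × ℝ | p.2 = ((p₁:ℝ) + (p₂:ℝ) * K) / ((q₁:ℝ) + (q₂:ℝ) * K) *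
        (p.1 - ((a₁:ℝ) + (a₂:ℝ) * K)) + ((b₁:ℝ) + (b₂:ℝ) * K)} := by
    intro t ht
    have B := hbound a₁ q₁ q₂ t ht ha₁ hq₁.2 hq₂.2
    have B2 := hbound a₂ q₁ q₂ t ht ha₂ hq₁.2 hq₂.2
    have C := hbound b₁ p₁ p₂ t ht hb₁ hp₁.2 hp₂.2
    have C2 := hbound b₂ p₁ p₂ t ht hb₂ hp₁.2 hp₂.2
    refine ⟨⟨⟨a₁ + t.1*q₁ + t.2*q₂*(k:ℤ), a₂ + t.1*q₂ + t.2*q₁, B.1, B2.2, rfl⟩,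
      ⟨b₁ + t.1*p₁ + t.2*p₂*(k:ℤ), b₂ + t.1*p₂ + t.2*p₁, C.1, C2.2, rfl⟩⟩, ?_⟩
    show (F t).2 = _
    have hx : (F t).1 - ((a₁:ℝ) + (a₂:ℝ)*K) = ((t.1:ℝ) + (t.2:ℝ)*K) * ((q₁:ℝ) + (q₂:ℝ)*K) := by
      simp only [hFdef]
      push_cast
      linear_combination (-((t.2:ℝ)*(q₂:ℝ))) * hK2
    have hy : (F t).2 = ((b₁:ℝ) + (b₂:ℝ)*K) + ((t.1:ℝ) + (t.2:ℝ)*K) * ((p₁:ℝ) + (p₂:ℝ)*K) := by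
      simp only [hFdef]
      push_cast
      linear_combination (-((t.2:ℝ)*(p₂:ℝ))) * hK2
    have hdiv : ((p₁:ℝ)+(p₂:ℝ)*K)/((q₁:ℝ)+(q₂:ℝ)*K) * (((t.1:ℝ)+(t.2:ℝ)*K) * ((q₁:ℝ)+(q₂:ℝ)*K))
        = ((t.1:ℝ)+(t.2:ℝ)*K)*((p₁:ℝ)+(p₂:ℝ)*K) := by
      rw [div_mul_eq_mul_div, div_eq_iff hQne]
      ring
    rw [hy, hx, hdiv]
    ring
  -- counting
  have hboxcard : box.card = (2*T+1) * (2*T+1) := by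
    rw [hboxdef, Finset.card_product, Int.card_Icc]
    have : ((T:ℤ) + 1 - -(T:ℤ)).toNat = 2*T+1 := by omega
    rw [this]
  have hfin : ((aSet k N ×ˢ aSet k N : Set (ℝ × ℝ)) ∩
      {p : ℝ × ℝ | p.2 = ((p₁:ℝ) + (p₂:ℝ) * K) / ((q₁:ℝ) + (q₂:ℝ) * K) *
        (p.1 - ((a₁:ℝ) + (a₂:ℝ) * K)) + ((b₁:ℝ) + (b₂:ℝ) * K)}).Finite :=
    (((aSet_finite k N).prod (aSet_finite k N)).inter_of_left _)
  have hsub : ↑(Finset.image F box) ⊆ (aSet k N ×ˢ aSet k N : Set (ℝ × ℝ)) ∩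
      {p : ℝ × ℝ | p.2 = ((p₁:ℝ) + (p₂:ℝ) * K) / ((q₁:ℝ) + (q₂:ℝ) * K) *
        (p.1 - ((a₁:ℝ) + (a₂:ℝ) * K)) + ((b₁:ℝ) + (b₂:ℝ) * K)} := by
    intro x hx
    simp only [Finset.coe_image, Set.mem_image, Finset.mem_coe] at hx
    obtain ⟨t, ht, rfl⟩ := hx
    exact hmem t ht
  have hle : (Finset.image F box).card ≤ ((aSet k N ×ˢ aSet k N : Set (ℝ × ℝ)) ∩
      {p : ℝ × ℝ | p.2 = ((p₁:ℝ) + (p₂:ℝ) * K) / ((q₁:ℝ) + (q₂:ℝ) * K) *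
        (p.1 - ((a₁:ℝ) + (a₂:ℝ) * K)) + ((b₁:ℝ) + (b₂:ℝ) * K)}).ncard := by
    rw [← Set.ncard_coe_finset]
    exact Set.ncard_le_ncard hsub hfin
  rw [Finset.card_image_of_injective _ hFinj, hboxcard] at hle
  have hfinal : 1/(16*(k:ℝ)^2) * N / M ≤ (((2*T+1) * (2*T+1) : ℕ) : ℝ) := by
    have hx2 : (Real.sqrt N / (4*k*Real.sqrt M))^2 = (N:ℝ)/(16*(k:ℝ)^2*M) := by
      rw [div_pow, Real.sq_sqrt (Nat.cast_nonneg N), mul_pow, mul_pow,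
        Real.sq_sqrt hM0]
      norm_num
    have h2T : Real.sqrt N / (4*k*Real.sqrt M) < 2*(T:ℝ)+1 := by
      linarith
    have hx0 : 0 ≤ Real.sqrt N / (4*k*Real.sqrt M) := by positivity
    push_cast
    calc 1/(16*(k:ℝ)^2) * N / M = (N:ℝ)/(16*(k:ℝ)^2*M) := by ring
      _ = (Real.sqrt N / (4*k*Real.sqrt M))^2 := hx2.symm
      _ ≤ (2*(T:ℝ)+1)^2 := pow_le_pow_left₀ hx0 h2T.le 2
      _ = (2*(T:ℝ)+1)*(2*(T:ℝ)+1) := by ring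
  calc 1/(16*(k:ℝ)^2) * N / M ≤ (((2*T+1) * (2*T+1) : ℕ) : ℝ) := hfinal
  _ ≤ _ := by exact_mod_cast hle
end
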